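/- arXiv:1103.0725 — 4 statements merged into one kernel-verified Lean document; each statement's English description precedes it below -/
import Mathlib

section
/- Let W be a restricted countable word over an alphabet X and let U and V be two reduced forms of W. Then for every finite subset F of X, the words U_F and V_F have the same free-group reduced form, i.e. [U_F] ≡ [V_F]. -/
/-! ## Countable words -/

/-- A countable word over an alphabet `X`: a countable linearly ordered index type
together with a letter (element of `X` with a sign, `true` = positive) at each index. -/
structure CWord (X : Type) : Type 1 where
  ι : Type
  [lo : LinearOrder ι]
  [cnt : Countable ι]
  letter : ι → X × Bool

attribute [instance] CWord.lo CWord.cnt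

namespace CWord

variable {X : Type}

/-- The formal inverse of a letter. -/
def invLetter (a : X × Bool) : X × Bool := (a.1, !a.2)

/-- Two countable words are equal (`≡`) when an order isomorphism of the index sets
matches the letter functions. -/
def Equiv (U V : CWord X) : Prop :=
  ∃ e : U.ι ≃o V.ι, ∀ i, V.letter (e i) = U.letter i

/-- The word obtained from `U` by keeping only the indices in `s` (with the induced order). -/
def restrict (U : CWord X) (s : Set U.ι) : CWord X where
  ι := ↥s
  letter := fun i => U.letter i.1

/-- `V` is a subword of `U`: the restriction of `U` to an order-convex set of indices. -/
def IsSubword (V U : CWord X) : Prop :=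
  ∃ s : Set U.ι, s.OrdConnected ∧ Equiv V (U.restrict s)

/-- Concatenation of two countable words (all of `U` before all of `V`). -/
def concat (U V : CWord X) : CWord X where
  ι := Lex (U.ι ⊕ V.ι)
  cnt := inferInstanceAs (Countable (U.ι ⊕ V.ι))
  letter := fun i => Sum.elim U.letter V.letter (ofLex i)

/-- The inverse of a countable word: reverse the order and invert every letter. -/
def inv (U : CWord X) : CWord X where
  ι := U.ιᵒᵈ
  cnt := inferInstanceAs (Countable U.ι)
  letter := fun i => invLetter (U.letter (OrderDual.ofDual i))

/-- The empty word. -/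
def empty (X : Type) : CWord X where
  ι := Fin 0
  letter := fun i => i.elim0

/-- `i` lies on an arch of `A`. -/
def OnArch {U : CWord X} (A : Set (U.ι × U.ι)) (i : U.ι) : Prop :=
  ∃ a ∈ A, i = a.1 ∨ i = a.2

/-- An arch system on the word `U`: a set of arches (recorded as pairs `(i,j)` with `i < j`)
joining mutually inverse letters, pairwise disjoint, mutually non-crossing, and such that
everything under an arch is matched under that arch. -/
structure IsArchSystem (U : CWord X) (A : Set (U.ι × U.ι)) : Prop where
  lt : ∀ a ∈ A, a.1 < a.2
  inv_letters : ∀ a ∈ A, U.letter a.2 = invLetter (U.letter a.1)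
  disjointEnds : ∀ a ∈ A, ∀ b ∈ A, a ≠ b →
    a.1 ≠ b.1 ∧ a.1 ≠ b.2 ∧ a.2 ≠ b.1 ∧ a.2 ≠ b.2
  noncrossing : ∀ a ∈ A, ∀ b ∈ A, ¬ (a.1 < b.1 ∧ b.1 < a.2 ∧ a.2 < b.2)
  nested : ∀ a ∈ A, ∀ k : U.ι, a.1 < k → k < a.2 →
    ∃ b ∈ A, (b.1 = k ∧ a.1 < b.2 ∧ b.2 < a.2) ∨ (b.2 = k ∧ a.1 < b.1 ∧ b.1 < a.2)

/-- A complete arch system: every index lies on an arch. -/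
def IsCompleteArchSystem (U : CWord X) (A : Set (U.ι × U.ι)) : Prop :=
  IsArchSystem U A ∧ ∀ i : U.ι, OnArch A i

/-- A word is reduced (irreducible) iff the only arch system on it is empty. -/
def Reduced (U : CWord X) : Prop := ∀ A, IsArchSystem U A → A = ∅

/-- A word is restricted iff every letter of the alphabet occurs
(with either sign) only finitely many times. -/
def Restricted (U : CWord X) : Prop := ∀ x : X, {i : U.ι | (U.letter i).1 = x}.Finite

/-- `V` is a reduced form of `U`: `V` is obtained from `U` by deleting all indices lying on
arches of a maximal (under inclusion) arch system on `U`. -/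
def IsReducedFormOf (V U : CWord X) : Prop :=
  ∃ A : Set (U.ι × U.ι), Maximal (IsArchSystem U) A ∧
    Equiv V (U.restrict {i | ¬ OnArch A i})

/-- `U_F`: the word obtained from `U` by deleting all letters outside `F ∪ F⁻¹`. -/
def subAlph (U : CWord X) (F : Set X) : CWord X :=
  U.restrict {i | (U.letter i).1 ∈ F}

/-- The element of the free group on `X` spelled by a finite countable word
(junk value `1` for words with infinite index set). -/
noncomputable def toFreeGroup (U : CWord X) : FreeGroup X := by
  classical
  exact if h : Finite U.ι then
    letI := h
    letI : Fintype U.ι := Fintype.ofFinite U.ι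
    (((List.finRange (Fintype.card U.ι)).map (fun n =>
      (FreeGroup.of (U.letter ((monoEquivOfFin U.ι rfl) n)).1) ^
        (if (U.letter ((monoEquivOfFin U.ι rfl) n)).2 then (1 : ℤ) else -1))).prod)
  else 1

/-- Concatenation of a finite list of countable words. -/
def concatList : List (CWord X) → CWord X
  | [] => empty X
  | w :: l => concat w (concatList l)

/-- A tame word: a finite concatenation of restricted reduced countable words. -/
def IsTame (W : CWord X) : Prop :=
  ∃ l : List (CWord X), (∀ v ∈ l, Restricted v ∧ Reduced v) ∧ Equiv W (concatList l)

theorem equiv_refl (U : CWord X) : Equiv U U := ⟨OrderIso.refl _, fun _ => rfl⟩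

theorem equiv_symm {U V : CWord X} (h : Equiv U V) : Equiv V U := by
  obtain ⟨e, he⟩ := h
  refine ⟨e.symm, fun i => ?_⟩
  have h2 := he (e.symm i)
  rw [OrderIso.apply_symm_apply] at h2
  exact h2.symm

theorem equiv_trans {U V W : CWord X} (h1 : Equiv U V) (h2 : Equiv V W) : Equiv U W := by
  obtain ⟨e, he⟩ := h1
  obtain ⟨f, hf⟩ := h2
  exact ⟨e.trans f, fun i => (hf (e i)).trans (he i)⟩

end CWord

/-- Restricted reduced countable words ("reduced tame words") over `X`. -/
abbrev RRWord (X : Type) : Type 1 := {W : CWord X // CWord.Restricted W ∧ CWord.Reduced W}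

instance rrwordSetoid (X : Type) : Setoid (RRWord X) where
  r a b := CWord.Equiv a.1 b.1
  iseqv := ⟨fun _ => CWord.equiv_refl _, CWord.equiv_symm, CWord.equiv_trans⟩

/-- The underlying set of the group `W(X)` of restricted reduced countable words over `X`
(words identified up to `≡`). -/
abbrev WGroup (X : Type) : Type 1 := Quotient (rrwordSetoid X)

theorem restricted_empty (X : Type) : CWord.Restricted (CWord.empty X) := by
  intro x
  haveI : Finite (CWord.empty X).ι := inferInstanceAs (Finite (Fin 0))
  apply Set.toFinite

theorem reduced_empty (X : Type) : CWord.Reduced (CWord.empty X) := by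
  intro A hA
  ext a
  simp only [Set.mem_empty_iff_false, iff_false]
  intro _
  exact a.1.elim0

/-- The empty word as a restricted reduced word. -/
def emptyRR (X : Type) : RRWord X := ⟨CWord.empty X, restricted_empty X, reduced_empty X⟩

/-- A group structure on `WGroup X` is *the* `W(X)`-group structure when multiplication is
given by "the reduced form of the concatenation", the identity is the empty word, and
inversion is given by the inverse word. -/
def IsWGroupStructure (X : Type) (g : Group (WGroup X)) : Prop :=
  letI := g
  (∀ a b c : RRWord X, CWord.IsReducedFormOf c.1 (CWord.concat a.1 b.1) →
      (⟦a⟧ * ⟦b⟧ : WGroup X) = ⟦c⟧) ∧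
  ((1 : WGroup X) = ⟦emptyRR X⟧) ∧
  (∀ a b : RRWord X, CWord.Equiv b.1 (CWord.inv a.1) → ((⟦a⟧ : WGroup X)⁻¹ = ⟦b⟧))

/-!
Fix an arch system `A` on `W` and a finite set `F` of letters. The indices of `W` carrying a letter
of `F` form a finite set `s`, and an arch has both ends in `s` or neither, since its two letters
are mutually inverse. Among the arches with ends in `s`, one spanning the fewest points of `s`
spans none at all (any such point lies on an arch nested strictly inside), so its two letters are
adjacent in `W_F` and cancel in the free group. Removing arches one at a time shows that deleting
the indices on `A` does not change `[W_F]`; hence `[U_F] = [W_F] = [V_F]`.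
-/

theorem FreeGroup.mk_eq_prod_map_zpow {X : Type} (L : List (X × Bool)) :
    FreeGroup.mk L = (L.map fun p => FreeGroup.of p.1 ^ (if p.2 then (1 : ℤ) else -1)).prod := by
  rw [← FreeGroup.lift_of_apply (FreeGroup.mk L), FreeGroup.lift_mk]
  congr 1
  refine List.map_congr_left fun p _ => ?_
  cases p.2 <;> simp

theorem List.SortedLT.map_strictMono {α β : Type*} [Preorder α] [Preorder β] {l : List α}
    (hl : l.SortedLT) {f : α → β} (hf : StrictMono f) : (l.map f).SortedLT :=
  List.sortedLT_iff_pairwise.mpr (List.pairwise_map.mpr (hl.pairwise.imp fun h => hf h))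

namespace CWord

variable {X : Type}

theorem toFreeGroup_eq_mk_of_sortedLT {U : CWord X} (l : List U.ι) (hl : l.SortedLT)
    (hmem : ∀ i, i ∈ l) : U.toFreeGroup = FreeGroup.mk (l.map U.letter) := by
  classical
  have hfin : Finite U.ι :=
    Set.finite_univ_iff.mp ((List.finite_toSet l).subset fun i _ => hmem i)
  let _ : Fintype U.ι := Fintype.ofFinite U.ι
  set e := monoEquivOfFin U.ι (rfl : Fintype.card U.ι = _)
  have hl' : (List.finRange (Fintype.card U.ι)).map e = l := by
    refine List.SortedLT.eq_of_mem_iff ?_ hl fun i => by simpa [hmem] using e.surjective i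
    rw [← List.ofFn_eq_map, List.sortedLT_ofFn_iff]
    exact e.strictMono
  rw [toFreeGroup, dif_pos hfin, FreeGroup.mk_eq_prod_map_zpow, ← hl', List.map_map,
    List.map_map]
  rfl

theorem toFreeGroup_congr {U V : CWord X} (h : Equiv U V) : U.toFreeGroup = V.toFreeGroup := by
  classical
  obtain ⟨e, he⟩ := h
  by_cases hU : Finite U.ι
  · let _ : Fintype U.ι := Fintype.ofFinite U.ι
    have hsorted := (Finset.univ : Finset U.ι).sortedLT_sort
    rw [toFreeGroup_eq_mk_of_sortedLT _ hsorted (by simp),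
      toFreeGroup_eq_mk_of_sortedLT _ (hsorted.map_strictMono e.strictMono)
        fun i => by simpa using e.surjective i,
      List.map_map]
    exact congrArg FreeGroup.mk (List.map_congr_left fun i _ => (he i).symm)
  · have hV : ¬ Finite V.ι := fun h => hU (Finite.of_equiv _ e.symm.toEquiv)
    rw [toFreeGroup, toFreeGroup, dif_neg hU, dif_neg hV]

theorem toFreeGroup_restrict_finset (W : CWord X) (s : Finset W.ι) :
    (W.restrict ↑s).toFreeGroup = FreeGroup.mk (s.sort.map W.letter) := by
  have hsorted := (Finset.univ : Finset ↥(↑s : Set W.ι)).sortedLT_sort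
  have hcoe : (Finset.univ : Finset ↥(↑s : Set W.ι)).sort.map Subtype.val = s.sort :=
    List.SortedLT.eq_of_mem_iff (hsorted.map_strictMono fun _ _ h => h) s.sortedLT_sort (by simp)
  have hmem (i : ↥(↑s : Set W.ι)) : i ∈ (Finset.univ : Finset ↥(↑s : Set W.ι)).sort :=
    (Finset.mem_sort _).2 (Finset.mem_univ i)
  rw [toFreeGroup_eq_mk_of_sortedLT _ hsorted hmem, ← hcoe, List.map_map]
  rfl

theorem Equiv.subAlph {U V : CWord X} (h : Equiv U V) (F : Set X) :
    Equiv (U.subAlph F) (V.subAlph F) := by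
  obtain ⟨e, he⟩ := h
  exact ⟨{ e.toEquiv.subtypeEquiv fun i => by simp [he i] with map_rel_iff' := e.le_iff_le },
    fun i => he i.1⟩

theorem subAlph_restrict (W : CWord X) (s : Set W.ι) (F : Set X) :
    Equiv ((W.restrict s).subAlph F) (W.restrict (s ∩ {i | (W.letter i).1 ∈ F})) :=
  ⟨{ Equiv.subtypeSubtypeEquivSubtypeInter (· ∈ s) (fun i => (W.letter i).1 ∈ F) with
      map_rel_iff' := Iff.rfl }, fun _ => rfl⟩

theorem Restricted.finite_setOf_letter_mem {W : CWord X} (hW : W.Restricted) {F : Set X}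
    (hF : F.Finite) : {i | (W.letter i).1 ∈ F}.Finite :=
  (hF.biUnion fun x _ => hW x).subset fun _ hi => Set.mem_biUnion hi rfl

theorem mk_map_sort_sdiff_of_adjacent_inverse {ι : Type*} [LinearOrder ι] (f : ι → X × Bool)
    {s : Finset ι} {i j : ι} (hi : i ∈ s) (hj : j ∈ s) (hij : i < j)
    (hgap : ∀ p ∈ s, ¬ (i < p ∧ p < j)) (hf : f j = invLetter (f i)) :
    FreeGroup.mk ((s \ {i, j}).sort.map f) = FreeGroup.mk (s.sort.map f) := by
  set l₁ := (s.filter (· < i)).sort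
  set l₂ := (s.filter (j < ·)).sort
  have hsplit : ∀ p ∈ s, p < i ∨ p = i ∨ p = j ∨ j < p := fun p hp => by
    have := hgap p hp
    rcases lt_trichotomy p i with h | h | h <;> rcases lt_trichotomy p j with h' | h' | h' <;>
      simp_all
  have hsorted : (l₁ ++ i :: j :: l₂).Pairwise (· < ·) := by
    simp only [List.pairwise_append, List.pairwise_cons, l₁, l₂, Finset.mem_sort,
      Finset.mem_filter, List.mem_cons]
    refine ⟨(Finset.sortedLT_sort _).pairwise,
      ⟨?_, fun _ h => h.2, (Finset.sortedLT_sort _).pairwise⟩, ?_⟩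
    · rintro p (rfl | ⟨-, hp⟩)
      exacts [hij, hij.trans hp]
    · rintro p ⟨-, hp⟩ q (rfl | rfl | ⟨-, hq⟩)
      exacts [hp, hp.trans hij, hp.trans (hij.trans hq)]
  have hs : s.sort = l₁ ++ i :: j :: l₂ :=
    s.sortedLT_sort.eq_of_mem_iff (List.sortedLT_iff_pairwise.mpr hsorted) fun p => by
      have := hsplit p
      simp only [l₁, l₂, Finset.mem_sort, List.mem_append, List.mem_cons, Finset.mem_filter]
      grind
  have hs' : (s \ {i, j}).sort = l₁ ++ l₂ :=
    (s \ {i, j}).sortedLT_sort.eq_of_mem_iff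
      (List.sortedLT_iff_pairwise.mpr (hsorted.sublist (by simp))) fun p => by
      have := hsplit p
      simp only [l₁, l₂, Finset.mem_sort, List.mem_append, Finset.mem_filter, Finset.mem_sdiff,
        Finset.mem_insert, Finset.mem_singleton]
      grind
  rw [hs, hs', List.map_append, List.map_append, List.map_cons, List.map_cons, hf]
  exact (FreeGroup.Red.exact.mpr ⟨_, FreeGroup.Red.Step.not.to_red, FreeGroup.Red.refl⟩).symm

namespace IsArchSystem

variable {W : CWord X} {A : Set (W.ι × W.ι)}

theorem exists_inner_arch (hA : IsArchSystem W A) {a : W.ι × W.ι} (ha : a ∈ A) {k : W.ι}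
    (hk₁ : a.1 < k) (hk₂ : k < a.2) :
    ∃ b ∈ A, a.1 < b.1 ∧ b.2 < a.2 ∧ (b.1 = k ∨ b.2 = k) := by
  obtain ⟨b, hb, ⟨rfl, h₁, h₂⟩ | ⟨rfl, h₁, h₂⟩⟩ := hA.nested a ha k hk₁ hk₂
  exacts [⟨b, hb, hk₁, h₂, Or.inl rfl⟩, ⟨b, hb, h₁, hk₂, Or.inr rfl⟩]

theorem exists_innermost (hA : IsArchSystem W A) {s : Finset W.ι}
    (hs : ∀ a ∈ A, a.1 ∈ s ↔ a.2 ∈ s) {a : W.ι × W.ι} (ha : a ∈ A) (has : a.1 ∈ s) :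
    ∃ b ∈ A, b.1 ∈ s ∧ ∀ p ∈ s, ¬ (b.1 < p ∧ p < b.2) := by
  suffices key : ∀ t : Finset W.ι, ∀ a ∈ A, a.1 ∈ s →
      s.filter (fun p => a.1 < p ∧ p < a.2) = t →
      ∃ b ∈ A, b.1 ∈ s ∧ ∀ p ∈ s, ¬ (b.1 < p ∧ p < b.2) from key _ a ha has rfl
  intro t
  induction t using Finset.strongInduction with
  | H t ih =>
    intro a ha has ht
    by_cases hempty : ∀ p ∈ s, ¬ (a.1 < p ∧ p < a.2)
    · exact ⟨a, ha, has, hempty⟩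
    push Not at hempty
    obtain ⟨p, hp, hp₁, hp₂⟩ := hempty
    obtain ⟨b, hb, hb₁, hb₂, hpb⟩ := hA.exists_inner_arch ha hp₁ hp₂
    have hbs : b.1 ∈ s := by
      rcases hpb with rfl | rfl
      exacts [hp, (hs b hb).2 hp]
    refine ih _ ?_ b hb hbs rfl
    rw [← ht, Finset.ssubset_iff_of_subset]
    · refine ⟨p, by simp [hp, hp₁, hp₂], ?_⟩
      simp only [Finset.mem_filter, not_and]
      rcases hpb with rfl | rfl <;> simp
    · intro q hq
      simp only [Finset.mem_filter] at hq ⊢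
      exact ⟨hq.1, hb₁.trans hq.2.1, hq.2.2.trans hb₂⟩

theorem mk_map_sort_filter_not_onArch (hA : IsArchSystem W A) [DecidablePred (OnArch A)]
    (s : Finset W.ι) (hs : ∀ a ∈ A, a.1 ∈ s ↔ a.2 ∈ s) :
    FreeGroup.mk ((s.filter (¬ OnArch A ·)).sort.map W.letter) =
      FreeGroup.mk (s.sort.map W.letter) := by
  induction s using Finset.strongInduction with
  | H s ih =>
    by_cases hfree : ∀ i ∈ s, ¬ OnArch A i
    · rw [Finset.filter_true_of_mem hfree]
    push Not at hfree
    obtain ⟨i, his, a, ha, hia⟩ := hfree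
    have has : a.1 ∈ s := by
      rcases hia with rfl | rfl
      exacts [his, (hs a ha).2 his]
    obtain ⟨b, hb, hb₁, hgap⟩ := hA.exists_innermost hs ha has
    have hb₂ : b.2 ∈ s := (hs b hb).1 hb₁
    have hsub : s \ {b.1, b.2} ⊂ s :=
      Finset.sdiff_ssubset (by simp [Finset.insert_subset_iff, hb₁, hb₂]) (by simp)
    have hs' : ∀ c ∈ A, c.1 ∈ s \ {b.1, b.2} ↔ c.2 ∈ s \ {b.1, b.2} := by
      intro c hc
      by_cases hcb : c = b
      · subst hcb
        simp
      · obtain ⟨h₁, h₂, h₃, h₄⟩ := hA.disjointEnds c hc b hb hcb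
        simp [hs c hc, h₁, h₂, h₃, h₄]
    have hfilter : (s \ {b.1, b.2}).filter (¬ OnArch A ·) = s.filter (¬ OnArch A ·) := by
      ext p
      simp only [Finset.mem_filter, Finset.mem_sdiff, Finset.mem_insert, Finset.mem_singleton]
      refine ⟨fun h => ⟨h.1.1, h.2⟩, fun h => ⟨⟨h.1, ?_⟩, h.2⟩⟩
      rintro (rfl | rfl)
      exacts [h.2 ⟨b, hb, Or.inl rfl⟩, h.2 ⟨b, hb, Or.inr rfl⟩]
    rw [← hfilter, ih _ hsub hs', mk_map_sort_sdiff_of_adjacent_inverse W.letter hb₁ hb₂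
      (hA.lt b hb) hgap (hA.inv_letters b hb)]

theorem toFreeGroup_subAlph_eq (hA : IsArchSystem W A) {U : CWord X}
    (hU : Equiv U (W.restrict {i | ¬ OnArch A i})) {F : Set X}
    (hF : {i | (W.letter i).1 ∈ F}.Finite) :
    (U.subAlph F).toFreeGroup = (W.subAlph F).toFreeGroup := by
  classical
  set s := hF.toFinset
  have hs : ∀ a ∈ A, a.1 ∈ s ↔ a.2 ∈ s := fun a ha => by
    simp [s, hA.inv_letters a ha, invLetter]
  have hset : {i | ¬ OnArch A i} ∩ {i | (W.letter i).1 ∈ F} = ↑(s.filter (¬ OnArch A ·)) := by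
    ext
    simp [s, and_comm]
  calc (U.subAlph F).toFreeGroup
      = (W.restrict ↑(s.filter (¬ OnArch A ·))).toFreeGroup :=
        toFreeGroup_congr (hset ▸ equiv_trans (hU.subAlph F) (W.subAlph_restrict _ F))
    _ = FreeGroup.mk ((s.filter (¬ OnArch A ·)).sort.map W.letter) :=
        toFreeGroup_restrict_finset W _
    _ = FreeGroup.mk (s.sort.map W.letter) := hA.mk_map_sort_filter_not_onArch s hs
    _ = (W.subAlph F).toFreeGroup := by
        rw [← toFreeGroup_restrict_finset, hF.coe_toFinset]
        rfl

end IsArchSystem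

end CWord

theorem statement0 {X : Type} (W : CWord X) (hW : CWord.Restricted W)
    (U V : CWord X) (hU : CWord.IsReducedFormOf U W) (hV : CWord.IsReducedFormOf V W)
    (F : Set X) (hF : F.Finite) :
    CWord.toFreeGroup (CWord.subAlph U F) = CWord.toFreeGroup (CWord.subAlph V F) := by
  obtain ⟨A, hA, hUA⟩ := hU
  obtain ⟨B, hB, hVB⟩ := hV
  have hfin := hW.finite_setOf_letter_mem hF
  rw [hA.1.toFreeGroup_subAlph_eq hUA hfin, hB.1.toFreeGroup_subAlph_eq hVB hfin]
end

section
/- Let W be a restricted countable word over an alphabet X. If for every finite subset F of X there is a complete arch system on W_F, then there is a complete arch system on W. -/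
/-! ## Statement -/

theorem statement1 {X : Type} (W : CWord X) (hW : CWord.Restricted W)
    (h : ∀ F : Set X, F.Finite → ∃ A, CWord.IsCompleteArchSystem (CWord.subAlph W F) A) :
    ∃ A, CWord.IsCompleteArchSystem W A := by
  classical
  rcases isEmpty_or_nonempty W.ι with hE | hNE
  · refine ⟨∅, ⟨⟨?_, ?_, ?_, ?_, ?_⟩, fun i => (hE.false i).elim⟩⟩ <;> simp
  · obtain ⟨g, hg⟩ := exists_surjective_nat W.ι
    set F : ℕ → Set X := fun n => (fun m => (W.letter (g m)).1) '' Set.Iic n with hF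
    have hFfin : ∀ n, (F n).Finite := fun n => (Set.finite_Iic n).image _
    have hFcover : ∀ i : W.ι, ∃ m, ∀ n, m ≤ n → (W.letter i).1 ∈ F n := by
      intro i
      obtain ⟨m, hm⟩ := hg i
      exact ⟨m, fun n hn => ⟨m, hn, congrArg (fun j => (W.letter j).1) hm⟩⟩
    have key : ∀ n : ℕ, ∃ A' : Set (W.ι × W.ι),
        (∀ a ∈ A', a.1 < a.2) ∧
        (∀ a ∈ A', W.letter a.2 = CWord.invLetter (W.letter a.1)) ∧
        (∀ a ∈ A', ∀ b ∈ A', a ≠ b → a.1 ≠ b.1 ∧ a.1 ≠ b.2 ∧ a.2 ≠ b.1 ∧ a.2 ≠ b.2) ∧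
        (∀ a ∈ A', ∀ b ∈ A', ¬(a.1 < b.1 ∧ b.1 < a.2 ∧ a.2 < b.2)) ∧
        (∀ a ∈ A', ∀ k : W.ι, (W.letter k).1 ∈ F n → a.1 < k → k < a.2 →
          ∃ b ∈ A', (b.1 = k ∧ a.1 < b.2 ∧ b.2 < a.2) ∨ (b.2 = k ∧ a.1 < b.1 ∧ b.1 < a.2)) ∧
        (∀ i : W.ι, (W.letter i).1 ∈ F n → ∃ a ∈ A', i = a.1 ∨ i = a.2) := by
      intro n
      obtain ⟨A, hAsys, hAcomp⟩ := h (F n) (hFfin n)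
      refine ⟨(fun p : (CWord.subAlph W (F n)).ι × (CWord.subAlph W (F n)).ι =>
        (p.1.1, p.2.1)) '' A, ?_, ?_, ?_, ?_, ?_, ?_⟩
      · rintro a ⟨p, hp, rfl⟩
        exact Subtype.coe_lt_coe.2 (hAsys.lt p hp)
      · rintro a ⟨p, hp, rfl⟩
        exact hAsys.inv_letters p hp
      · rintro a ⟨p, hp, rfl⟩ b ⟨q, hq, rfl⟩ hne
        have hpq : p ≠ q := by rintro rfl; exact hne rfl
        obtain ⟨h1, h2, h3, h4⟩ := hAsys.disjointEnds p hp q hq hpq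
        exact ⟨Subtype.coe_injective.ne h1, Subtype.coe_injective.ne h2,
          Subtype.coe_injective.ne h3, Subtype.coe_injective.ne h4⟩
      · rintro a ⟨p, hp, rfl⟩ b ⟨q, hq, rfl⟩ ⟨h1, h2, h3⟩
        exact hAsys.noncrossing p hp q hq
          ⟨Subtype.coe_lt_coe.1 h1, Subtype.coe_lt_coe.1 h2, Subtype.coe_lt_coe.1 h3⟩
      · rintro a ⟨p, hp, rfl⟩ k hk h1 h2
        obtain ⟨q, hq, hcase⟩ := hAsys.nested p hp ⟨k, hk⟩
          (Subtype.coe_lt_coe.1 h1) (Subtype.coe_lt_coe.1 h2)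
        refine ⟨(q.1.1, q.2.1), ⟨q, hq, rfl⟩, ?_⟩
        rcases hcase with ⟨hq1, hq2, hq3⟩ | ⟨hq1, hq2, hq3⟩
        · exact Or.inl ⟨congrArg Subtype.val hq1, Subtype.coe_lt_coe.2 hq2,
            Subtype.coe_lt_coe.2 hq3⟩
        · exact Or.inr ⟨congrArg Subtype.val hq1, Subtype.coe_lt_coe.2 hq2,
            Subtype.coe_lt_coe.2 hq3⟩
      · intro i hi
        obtain ⟨p, hp, hcase⟩ := hAcomp ⟨i, hi⟩
        refine ⟨(p.1.1, p.2.1), ⟨p, hp, rfl⟩, ?_⟩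
        rcases hcase with h1 | h1
        · exact Or.inl (congrArg Subtype.val h1)
        · exact Or.inr (congrArg Subtype.val h1)
    choose A' hlt hinv hdis hcross hnest hcomp using key
    set U : Ultrafilter ℕ := Ultrafilter.of Filter.atTop with hUdef
    have hU : ∀ s ∈ (Filter.atTop : Filter ℕ), s ∈ U := fun s hs => Ultrafilter.of_le _ hs
    set B : Set (W.ι × W.ι) := {p | {n | p ∈ A' n} ∈ U} with hBdef
    have hBone : ∀ p ∈ B, ∃ n, p ∈ A' n := by
      intro p hp
      obtain ⟨n, hn⟩ := Ultrafilter.nonempty_of_mem hp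
      exact ⟨n, hn⟩
    have hBtwo : ∀ p ∈ B, ∀ q ∈ B, ∃ n, p ∈ A' n ∧ q ∈ A' n := by
      intro p hp q hq
      obtain ⟨n, hn1, hn2⟩ := Ultrafilter.nonempty_of_mem (Filter.inter_mem hp hq)
      exact ⟨n, hn1, hn2⟩
    have pigeon : ∀ (i : W.ι) (T : Set ℕ) (P : W.ι × W.ι → Prop), T ∈ U →
        (∀ n ∈ T, ∃ b ∈ A' n, (b.1 = i ∨ b.2 = i) ∧ P b) → ∃ b ∈ B, P b := by
      intro i T P hT hex
      choose! b hbmem hbi hbP using hex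
      set S : Set (W.ι × W.ι) :=
        ({i} ×ˢ {j | (W.letter j).1 = (W.letter i).1}) ∪
        ({j | (W.letter j).1 = (W.letter i).1} ×ˢ {i}) with hSdef
      have hSfin : S.Finite := by
        apply Set.Finite.union
        · exact (Set.finite_singleton i).prod (hW (W.letter i).1)
        · exact (hW (W.letter i).1).prod (Set.finite_singleton i)
      have hbS : ∀ n ∈ T, b n ∈ S := by
        intro n hn
        have hmem := hbmem n hn
        have hletters : (W.letter (b n).2).1 = (W.letter (b n).1).1 := by
          rw [hinv n _ hmem]; rfl
        rcases hbi n hn with h1 | h1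
        · exact Or.inl ⟨h1, show (W.letter (b n).2).1 = _ by rw [hletters, h1]⟩
        · exact Or.inr ⟨show (W.letter (b n).1).1 = _ by rw [← hletters, h1], h1⟩
      have hsub : T ⊆ ⋃ s ∈ S, {n ∈ T | b n = s} := by
        intro n hn
        exact Set.mem_biUnion (hbS n hn) ⟨hn, rfl⟩
      have hbig : (⋃ s ∈ S, {n ∈ T | b n = s}) ∈ U := Filter.mem_of_superset hT hsub
      obtain ⟨s, _, hs⟩ := (Ultrafilter.finite_biUnion_mem_iff hSfin).1 hbig
      obtain ⟨n₀, hn₀T, hn₀⟩ := Ultrafilter.nonempty_of_mem hs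
      refine ⟨s, ?_, hn₀ ▸ hbP n₀ hn₀T⟩
      exact Filter.mem_of_superset hs (fun n hn => hn.2 ▸ hbmem n hn.1)
    refine ⟨B, ⟨⟨?_, ?_, ?_, ?_, ?_⟩, ?_⟩⟩
    · intro a ha
      obtain ⟨n, hn⟩ := hBone a ha
      exact hlt n a hn
    · intro a ha
      obtain ⟨n, hn⟩ := hBone a ha
      exact hinv n a hn
    · intro a ha b hb hne
      obtain ⟨n, hn1, hn2⟩ := hBtwo a ha b hb
      exact hdis n a hn1 b hn2 hne
    · intro a ha b hb
      obtain ⟨n, hn1, hn2⟩ := hBtwo a ha b hb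
      exact hcross n a hn1 b hn2
    · intro a ha k h1 h2
      obtain ⟨m, hm⟩ := hFcover k
      have hT : ({n | a ∈ A' n} ∩ Set.Ici m) ∈ U :=
        Filter.inter_mem ha (hU _ (Filter.Ici_mem_atTop m))
      refine pigeon k ({n | a ∈ A' n} ∩ Set.Ici m) _ hT ?_
      rintro n ⟨hna, hnm⟩
      obtain ⟨b, hb, hcase⟩ := hnest n a hna k (hm n hnm) h1 h2
      refine ⟨b, hb, ?_, hcase⟩
      rcases hcase with ⟨hb1, _⟩ | ⟨hb1, _⟩
      · exact Or.inl hb1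
      · exact Or.inr hb1
    · intro i
      obtain ⟨m, hm⟩ := hFcover i
      refine pigeon i (Set.Ici m) (fun b => i = b.1 ∨ i = b.2)
        (hU _ (Filter.Ici_mem_atTop m)) ?_
      intro n hn
      obtain ⟨a, ha, hcase⟩ := hcomp n i (hm n hn)
      exact ⟨a, ha, hcase.imp Eq.symm Eq.symm, hcase⟩
end

section
/- Every restricted countable word W over an alphabet X has a reduced form, and any two reduced forms of W are equal as countable words (≡). -/
/-! ## Statement -/

namespace CWord

open Classical in
/-- Indicator of a proposition in `ZMod 2`. -/
noncomputable def ch (p : Prop) : ZMod 2 := if p then 1 else 0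

lemma ch_add_self (p : Prop) : ch p + ch p = 0 := by
  unfold ch; split <;> decide

lemma zmod2_add_self (x : ZMod 2) : x + x = 0 := by
  revert x; decide

lemma zmod2_add_eq_zero_iff {x y : ZMod 2} : x + y = 0 ↔ x = y := by
  revert x y; decide

lemma ch_inj {p q : Prop} (h : ch p = ch q) : p ↔ q := by
  unfold ch at h
  by_cases hp : p <;> by_cases hq : q <;> simp [hp, hq] at h ⊢ <;> exact absurd h (by decide)

variable {X : Type} {W : CWord X}

/-- `x` lies strictly between `s` and `t` (in either order). -/
def Btw (s t x : W.ι) : Prop := (s < x ∧ x < t) ∨ (t < x ∧ x < s)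

lemma btw_symm {s t x : W.ι} (h : Btw s t x) : Btw t s x := h.symm

lemma btw_iff_lt {s t x : W.ι} (hxs : x ≠ s) (hxt : x ≠ t) :
    Btw s t x ↔ ¬ ((x < s) ↔ (x < t)) := by
  constructor
  · rintro (⟨a, b⟩ | ⟨a, b⟩) h
    · exact absurd (h.2 b) (not_lt.2 a.le)
    · exact absurd (h.1 b) (not_lt.2 a.le)
  · intro h
    rcases lt_trichotomy x s with h1 | h1 | h1
    · rcases lt_trichotomy x t with h2 | h2 | h2
      · exact absurd (iff_of_true h1 h2) h
      · exact absurd h2 hxt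
      · exact Or.inr ⟨h2, h1⟩
    · exact absurd h1 hxs
    · rcases lt_trichotomy x t with h2 | h2 | h2
      · exact Or.inl ⟨h1, h2⟩
      · exact absurd h2 hxt
      · exact absurd (iff_of_false (not_lt.2 h1.le) (not_lt.2 h2.le)) h

lemma btw_iff_gt {s t x : W.ι} (hxs : x ≠ s) (hxt : x ≠ t) :
    Btw s t x ↔ ¬ ((s < x) ↔ (t < x)) := by
  have e1 : s < x ↔ ¬ (x < s) :=
    ⟨fun h => not_lt.2 h.le, fun h => hxs.lt_or_gt.resolve_left h⟩
  have e2 : t < x ↔ ¬ (x < t) :=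
    ⟨fun h => not_lt.2 h.le, fun h => hxt.lt_or_gt.resolve_left h⟩
  rw [btw_iff_lt hxs hxt, e1, e2]
  tauto

lemma ch_conv {s t x : W.ι} (hxs : x ≠ s) (hxt : x ≠ t) :
    ch (x < s) + ch (x < t) = ch (Btw s t x) := by
  by_cases h1 : x < s <;> by_cases h2 : x < t <;>
    simp [ch, btw_iff_lt hxs hxt, h1, h2] <;> decide

lemma ch_conv' {s t x : W.ι} (hxs : x ≠ s) (hxt : x ≠ t) :
    ch (s < x) + ch (t < x) = ch (Btw s t x) := by
  by_cases h1 : s < x <;> by_cases h2 : t < x <;>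
    simp [ch, btw_iff_gt hxs hxt, h1, h2] <;> decide

/-- Generic mod-2 telescoping. -/
lemma ts (f : ℕ → ZMod 2) (n : ℕ) : ∑ k ∈ Finset.range n, (f k + f (k + 1)) = f 0 + f n := by
  induction n with
  | zero => simp [zmod2_add_self]
  | succ n ih =>
      rw [Finset.sum_range_succ, ih]
      have : f n + f n = 0 := zmod2_add_self _
      linear_combination (this : _)

end CWord
namespace CWord

variable {X : Type} {W : CWord X}

/-- Unordered arc relation of an arch system. -/
def ArcOf (S : Set (W.ι × W.ι)) (i j : W.ι) : Prop := (i, j) ∈ S ∨ (j, i) ∈ S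

lemma ArcOf.symm {S : Set (W.ι × W.ι)} {i j : W.ι} (h : ArcOf S i j) : ArcOf S j i :=
  Or.symm h

lemma onArch_iff {S : Set (W.ι × W.ι)} {i : W.ι} : OnArch S i ↔ ∃ j, ArcOf S i j := by
  constructor
  · rintro ⟨a, ha, h | h⟩
    · exact ⟨a.2, Or.inl (by rw [h, Prod.mk.eta]; exact ha)⟩
    · exact ⟨a.1, Or.inr (by rw [h, Prod.mk.eta]; exact ha)⟩
  · rintro ⟨j, h | h⟩
    · exact ⟨(i, j), h, Or.inl rfl⟩
    · exact ⟨(j, i), h, Or.inr rfl⟩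

lemma onArch_of_arc {S : Set (W.ι × W.ι)} {i j : W.ι} (h : ArcOf S i j) : OnArch S i :=
  onArch_iff.2 ⟨j, h⟩

variable {S : Set (W.ι × W.ι)} (hS : IsArchSystem W S)

include hS

lemma arc_ne {i j : W.ι} (h : ArcOf S i j) : i ≠ j := by
  rcases h with h | h
  · exact (hS.lt _ h).ne
  · exact (hS.lt _ h).ne'

lemma arc_letter {i j : W.ι} (h : ArcOf S i j) : W.letter j = invLetter (W.letter i) := by
  rcases h with h | h
  · exact hS.inv_letters _ h
  · rw [hS.inv_letters _ h]
    simp [invLetter]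

lemma arc_unique {i j k : W.ι} (h1 : ArcOf S i j) (h2 : ArcOf S i k) : j = k := by
  rcases h1 with h1 | h1 <;> rcases h2 with h2 | h2
  · by_cases he : ((i, j) : W.ι × W.ι) = (i, k)
    · injection he
    · exact absurd rfl (hS.disjointEnds _ h1 _ h2 he).1
  · by_cases he : ((i, j) : W.ι × W.ι) = (k, i)
    · injection he with e1 e2
      have hlt : i < j := hS.lt _ h1
      exact absurd hlt (by rw [e2]; exact lt_irrefl i)
    · exact absurd rfl (hS.disjointEnds _ h1 _ h2 he).2.1
  · by_cases he : ((j, i) : W.ι × W.ι) = (i, k)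
    · injection he with e1 e2
      have hlt : j < i := hS.lt _ h1
      exact absurd hlt (by rw [e1]; exact lt_irrefl i)
    · exact absurd rfl (hS.disjointEnds _ h1 _ h2 he).2.2.1
  · by_cases he : ((j, i) : W.ι × W.ι) = (k, i)
    · injection he
    · exact absurd rfl (hS.disjointEnds _ h1 _ h2 he).2.2.2

/-- An index strictly inside an arch is on some arch (in fact inside). -/
lemma onArch_of_btw {s t x : W.ι} (h : ArcOf S s t) (hb : Btw s t x) : OnArch S x := by
  rcases h with h | h <;> rcases hb with ⟨h1, h2⟩ | ⟨h1, h2⟩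
  · obtain ⟨b, hb, hcase⟩ := hS.nested _ h x h1 h2
    rcases hcase with ⟨he, _⟩ | ⟨he, _⟩
    · exact ⟨b, hb, Or.inl he.symm⟩
    · exact ⟨b, hb, Or.inr he.symm⟩
  · exact absurd ((hS.lt _ h).trans (h1.trans h2)) (lt_irrefl _)
  · exact absurd ((hS.lt _ h).trans (h1.trans h2)) (lt_irrefl _)
  · obtain ⟨b, hb, hcase⟩ := hS.nested _ h x h1 h2
    rcases hcase with ⟨he, _⟩ | ⟨he, _⟩
    · exact ⟨b, hb, Or.inl he.symm⟩
    · exact ⟨b, hb, Or.inr he.symm⟩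

/-- L2: an unmatched index is never strictly inside an arch. -/
lemma not_btw_of_unmatched {s t x : W.ι} (hx : ¬ OnArch S x) (h : ArcOf S s t) :
    ¬ Btw s t x := fun hb => hx (onArch_of_btw hS h hb)

/-- An index strictly inside an arch has its partner strictly inside. -/
lemma partner_btw {s t x y : W.ι} (h : ArcOf S s t) (hb : Btw s t x) (hxy : ArcOf S x y) :
    Btw s t y := by
  have main : ∀ {s t : W.ι}, (s, t) ∈ S → s < x → x < t → ∀ {y}, ArcOf S x y →
      s < y ∧ y < t := by
    intro s t h h1 h2 y hxy
    obtain ⟨b, hb', hcase⟩ := hS.nested _ h x h1 h2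
    rcases hcase with ⟨he, ha1, ha2⟩ | ⟨he, ha1, ha2⟩
    · have hy : y = b.2 := arc_unique hS hxy (Or.inl (by rw [← he, Prod.mk.eta]; exact hb'))
      exact ⟨by rw [hy]; exact ha1, by rw [hy]; exact ha2⟩
    · have hy : y = b.1 := arc_unique hS hxy (Or.inr (by rw [← he, Prod.mk.eta]; exact hb'))
      exact ⟨by rw [hy]; exact ha1, by rw [hy]; exact ha2⟩
  rcases h with h | h <;> rcases hb with ⟨h1, h2⟩ | ⟨h1, h2⟩
  · exact Or.inl (main h h1 h2 hxy)
  · exact absurd ((hS.lt _ h).trans (h1.trans h2)) (lt_irrefl _)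
  · exact absurd ((hS.lt _ h).trans (h1.trans h2)) (lt_irrefl _)
  · exact Or.inr (main h h1 h2 hxy)

/-- Noncrossing: two arcs of one system are nested or disjoint. -/
lemma btw_iff_btw {a b s t : W.ι} (hab : ArcOf S a b) (hst : ArcOf S s t)
    (h1 : a ≠ s) (h2 : a ≠ t) (h3 : b ≠ s) (h4 : b ≠ t) :
    Btw s t a ↔ Btw s t b :=
  ⟨fun h => partner_btw hS hst h hab, fun h => partner_btw hS hst h hab.symm⟩

/-- NC: mod-2 count of endpoints of one arc below the two ends of another. -/
lemma ch_nc {a b s t : W.ι} (hab : ArcOf S a b) (hst : ArcOf S s t)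
    (h1 : a ≠ s) (h2 : a ≠ t) (h3 : b ≠ s) (h4 : b ≠ t) :
    ch (a < s) + ch (a < t) + (ch (b < s) + ch (b < t)) = 0 := by
  rw [ch_conv h1 h2, ch_conv h3 h4, ← (btw_iff_btw hS hab hst h1 h2 h3 h4).eq]
  exact zmod2_add_self _

end CWord
namespace CWord

variable {X : Type} {W : CWord X}

lemma invLetter_invol (a : X × Bool) : invLetter (invLetter a) = a := by
  simp [invLetter]

/-- The system used for the `k`-th step of an alternating walk. -/
def sysST (S T : Set (W.ι × W.ι)) (k : ℕ) : Set (W.ι × W.ι) := if k % 2 = 0 then T else S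

open Classical in
/-- The partner of `i` in `S` (junk if unmatched). -/
noncomputable def pr (S : Set (W.ι × W.ι)) (i : W.ι) : W.ι :=
  if h : ∃ j, ArcOf S i j then h.choose else i

lemma pr_spec {S : Set (W.ι × W.ι)} {i : W.ι} (h : OnArch S i) : ArcOf S i (pr S i) := by
  rw [onArch_iff] at h
  rw [pr, dif_pos h]
  exact h.choose_spec

/-- The alternating walk starting at `u`, using `T` for even steps, `S` for odd. -/
noncomputable def trip (S T : Set (W.ι × W.ι)) (u : W.ι) : ℕ → W.ι
  | 0 => u
  | k + 1 => pr (sysST S T k) (trip S T u k)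

/-- The `k`-th step of the walk from `u` is possible. -/
def wgood (S T : Set (W.ι × W.ι)) (u : W.ι) (k : ℕ) : Prop :=
  OnArch (sysST S T k) (trip S T u k)

/-- Length of the maximal alternating walk from `u`. -/
noncomputable def wlen (S T : Set (W.ι × W.ι)) (u : W.ι) : ℕ :=
  sInf {k | ¬ wgood S T u k}

noncomputable def far (S T : Set (W.ι × W.ι)) (u : W.ι) : W.ι :=
  trip S T u (wlen S T u)

variable {S T : Set (W.ι × W.ι)} (hS : IsArchSystem W S) (hT : IsArchSystem W T)

include hS hT in
lemma sys_arch (k : ℕ) : IsArchSystem W (sysST S T k) := by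
  unfold sysST; split
  · exact hT
  · exact hS

lemma sys_parity {k l : ℕ} (h : k % 2 = l % 2) : sysST S T k = sysST S T l := by
  unfold sysST; rw [h]

lemma sys_odd {k : ℕ} (h : k % 2 = 1) : sysST S T k = S := by
  unfold sysST; rw [h]; simp

lemma sys_even {k : ℕ} (h : k % 2 = 0) : sysST S T k = T := by
  unfold sysST; rw [h]; simp

lemma sys_swap (j : ℕ) : sysST T S j = sysST S T (j + 1) := by
  unfold sysST
  rcases Nat.mod_two_eq_zero_or_one j with h | h <;>
    · rw [h]; rw [show (j+1) % 2 = 1 - j % 2 by omega, h] <;> simp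

lemma trip_arcStep {u : W.ι} {k : ℕ} (h : wgood S T u k) :
    ArcOf (sysST S T k) (trip S T u k) (trip S T u (k + 1)) := by
  rw [show trip S T u (k+1) = pr (sysST S T k) (trip S T u k) from rfl]
  exact pr_spec h

include hS hT in
lemma trip_base_letter {u : W.ι} {k : ℕ} (hgood : ∀ j < k, wgood S T u j) :
    (W.letter (trip S T u k)).1 = (W.letter u).1 := by
  induction k with
  | zero => rfl
  | succ k ih =>
      have harc := trip_arcStep (hgood k (Nat.lt_succ_self _))
      have := arc_letter (sys_arch hS hT k) harc
      rw [this]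
      exact ih (fun j hj => hgood j (hj.trans (Nat.lt_succ_self _)))

include hS hT in
/-- No repeats along a good initial segment of a walk. -/
lemma trip_norepeat {u : W.ι} (hu : ¬ OnArch S u) :
    ∀ m, (∀ j < m, wgood S T u j) → ∀ k < m, trip S T u k ≠ trip S T u m := by
  intro m
  induction m using Nat.strong_induction_on with
  | _ m IH =>
    intro hgood k hk heq
    rcases Nat.lt_or_ge (k+1) m with hkm | hkm
    swap
    · -- m = k+1 : adjacent
      have hm : m = k + 1 := le_antisymm hkm hk
      subst hm
      exact arc_ne (sys_arch hS hT k) (trip_arcStep (hgood k hk)) heq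
    · have hm1 : m - 1 < m := by omega
      have A1 : ArcOf (sysST S T (m-1)) (trip S T u (m-1)) (trip S T u m) := by
        have := trip_arcStep (hgood (m-1) hm1)
        rwa [show m - 1 + 1 = m by omega] at this
      rcases Nat.eq_zero_or_pos k with hk0 | hk0
      · -- k = 0
        subst hk0
        have heq0 : u = trip S T u m := heq
        have honu : OnArch (sysST S T (m-1)) u := by
          rw [heq0]; exact onArch_of_arc A1.symm
        rcases Nat.mod_two_eq_zero_or_one (m-1) with hp | hp
        · -- in-edge at m-1 has type T; use out-edge at 0 (type T)
          have hsys : sysST S T (m-1) = sysST S T 0 := sys_parity (by omega)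
          have A3 : ArcOf (sysST S T 0) (trip S T u 0) (trip S T u 1) :=
            trip_arcStep (hgood 0 (by omega))
          have A1' : ArcOf (sysST S T 0) (trip S T u 0) (trip S T u (m-1)) := by
            rw [← hsys]
            have := A1.symm
            rw [← heq] at this
            exact this
          have he1 : trip S T u 1 = trip S T u (m-1) :=
            arc_unique (sys_arch hS hT 0) A3 A1'
          have h1m : 1 < m - 1 := by
            rcases Nat.lt_or_ge 1 (m-1) with h | h
            · exact h
            · exfalso
              have : m - 1 = 1 ∨ m - 1 = 0 := by omega
              rcases this with h | h
              · rw [h] at hp; omega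
              · omega
          exact IH (m-1) hm1 (fun j hj => hgood j (by omega)) 1 h1m he1
        · -- in-edge at m-1 has type S: contradiction with hu
          rw [sys_odd hp] at honu
          exact hu honu
      · -- k ≥ 1
        by_cases hp : (k-1) % 2 = (m-1) % 2
        · have A2 : ArcOf (sysST S T (k-1)) (trip S T u (k-1)) (trip S T u k) := by
            have := trip_arcStep (hgood (k-1) (by omega))
            rwa [show k - 1 + 1 = k by omega] at this
          have A2' : ArcOf (sysST S T (m-1)) (trip S T u m) (trip S T u (k-1)) := by
            rw [← sys_parity hp, ← heq]
            exact A2.symm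
          have he : trip S T u (k-1) = trip S T u (m-1) :=
            arc_unique (sys_arch hS hT (m-1)) A2' A1.symm
          exact IH (m-1) hm1 (fun j hj => hgood j (by omega)) (k-1) (by omega) he
        · have hp2 : k % 2 = (m-1) % 2 := by omega
          have A3 : ArcOf (sysST S T k) (trip S T u k) (trip S T u (k+1)) :=
            trip_arcStep (hgood k hk)
          have A3' : ArcOf (sysST S T (m-1)) (trip S T u m) (trip S T u (k+1)) := by
            rw [← sys_parity hp2, ← heq]
            exact A3
          have he : trip S T u (k+1) = trip S T u (m-1) :=
            arc_unique (sys_arch hS hT (m-1)) A3' A1.symm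
          rcases Nat.lt_or_ge (k+1) (m-1) with h | h
          · exact IH (m-1) hm1 (fun j hj => hgood j (by omega)) (k+1) h he
          · have : k + 1 = m - 1 := by omega
            omega

include hS hT in
lemma exists_stuck (hW : Restricted W) {u : W.ι} (hu : ¬ OnArch S u) :
    ∃ k, ¬ wgood S T u k := by
  by_contra hall
  push_neg at hall
  have hgood : ∀ k, wgood S T u k := hall
  have hinj : Function.Injective (fun k => trip S T u k) := by
    intro k m hkm
    by_contra hne
    rcases Ne.lt_or_gt hne with h | h
    · exact trip_norepeat hS hT hu m (fun j _ => hgood j) k h hkm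
    · exact trip_norepeat hS hT hu k (fun j _ => hgood j) m h hkm.symm
  have hmem : ∀ k, trip S T u k ∈ {i | (W.letter i).1 = (W.letter u).1} := by
    intro k
    exact trip_base_letter hS hT (fun j _ => hgood j)
  exact (hW ((W.letter u).1)).not_infinite
    (Set.infinite_of_injective_forall_mem hinj hmem)

include hS hT in
lemma wlen_stuck (hW : Restricted W) {u : W.ι} (hu : ¬ OnArch S u) :
    ¬ wgood S T u (wlen S T u) := by
  obtain ⟨k, hk⟩ := exists_stuck hS hT hW hu
  have h : {k | ¬ wgood S T u k}.Nonempty := ⟨k, hk⟩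
  exact Nat.sInf_mem h

lemma wlen_good {u : W.ι} {k : ℕ} (hk : k < wlen S T u) : wgood S T u k := by
  by_contra h
  exact absurd (Nat.sInf_le h) (not_le.2 hk)

lemma wlen_eq {u : W.ι} {n : ℕ} (hgood : ∀ k < n, wgood S T u k) (hst : ¬ wgood S T u n) :
    wlen S T u = n := by
  refine le_antisymm (Nat.sInf_le hst) (not_lt.1 fun h => ?_)
  exact (Nat.sInf_mem (⟨n, hst⟩ : Set.Nonempty {k | ¬ wgood S T u k})) (hgood _ h)

lemma trip_arc {u : W.ι} {k : ℕ} (hk : k < wlen S T u) :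
    ArcOf (sysST S T k) (trip S T u k) (trip S T u (k + 1)) :=
  trip_arcStep (wlen_good hk)

include hS hT in
lemma trip_letter {u : W.ι} {k : ℕ} (hk : k ≤ wlen S T u) :
    W.letter (trip S T u k) =
      if k % 2 = 0 then W.letter u else invLetter (W.letter u) := by
  induction k with
  | zero => simp [trip]
  | succ k ih =>
      have harc := trip_arc (show k < wlen S T u from hk)
      have hl := arc_letter (sys_arch hS hT k) harc
      rw [hl, ih (by omega)]
      rcases Nat.mod_two_eq_zero_or_one k with h | h
      · simp [h, show (k+1) % 2 = 1 by omega]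
      · simp [h, show (k+1) % 2 = 0 by omega, invLetter_invol]

end CWord
namespace CWord

variable {X : Type} {W : CWord X}
variable {S T : Set (W.ι × W.ι)} (hS : IsArchSystem W S) (hT : IsArchSystem W T)
  (hW : Restricted W)

include hS hT hW in
lemma far_unmatched_odd {u : W.ι} (hu : ¬ OnArch S u) (hodd : wlen S T u % 2 = 1) :
    ¬ OnArch S (far S T u) := by
  have h := wlen_stuck hS hT hW hu
  rwa [wgood, sys_odd hodd] at h

include hS hT hW in
lemma far_unmatched_even {u : W.ι} (hu : ¬ OnArch S u) (hev : wlen S T u % 2 = 0) :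
    ¬ OnArch T (far S T u) := by
  have h := wlen_stuck hS hT hW hu
  rwa [wgood, sys_even hev] at h

include hS hT in
lemma far_matched {u : W.ι} (hpos : 0 < wlen S T u) :
    OnArch (sysST S T (wlen S T u - 1)) (far S T u) := by
  have harc := trip_arc (S := S) (T := T) (u := u) (show wlen S T u - 1 < wlen S T u by omega)
  rw [show wlen S T u - 1 + 1 = wlen S T u by omega] at harc
  exact onArch_of_arc harc.symm

include hS hT in
lemma far_ne {u : W.ι} (hu : ¬ OnArch S u) (hpos : 0 < wlen S T u) : u ≠ far S T u :=
  trip_norepeat hS hT hu (wlen S T u) (fun j hj => wlen_good hj) 0 hpos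

include hS hT in
lemma far_letter {u : W.ι} :
    W.letter (far S T u) =
      if wlen S T u % 2 = 0 then W.letter u else invLetter (W.letter u) :=
  trip_letter hS hT (le_refl _)

include hS hT in
/-- Reversal of an odd walk. -/
lemma rev_odd {u : W.ι} (hu : ¬ OnArch S u) (hodd : wlen S T u % 2 = 1) :
    (∀ j ≤ wlen S T u, trip S T (far S T u) j = trip S T u (wlen S T u - j)) ∧
      wlen S T (far S T u) = wlen S T u ∧ far S T (far S T u) = u := by
  set n := wlen S T u with hn
  set v := far S T u with hv
  have key : ∀ j, j ≤ n → trip S T v j = trip S T u (n - j) := by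
    intro j
    induction j with
    | zero => intro _; rfl
    | succ j ih =>
        intro hj
        have ihj := ih (by omega)
        have harc : ArcOf (sysST S T (n - j - 1)) (trip S T u (n - j - 1)) (trip S T u (n - j)) := by
          have h := trip_arc (S := S) (T := T) (u := u) (show n - j - 1 < n by omega)
          rwa [show n - j - 1 + 1 = n - j by omega] at h
        have hp : (n - j - 1) % 2 = j % 2 := by omega
        have harc' : ArcOf (sysST S T j) (trip S T u (n - j)) (trip S T u (n - j - 1)) := by
          rw [← sys_parity hp]
          exact harc.symm
        have : trip S T v (j+1) = pr (sysST S T j) (trip S T u (n - j)) := by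
          rw [show trip S T v (j+1) = pr (sysST S T j) (trip S T v j) from rfl, ihj]
        rw [this, show n - (j+1) = n - j - 1 by omega]
        exact arc_unique (sys_arch hS hT j) (pr_spec (onArch_of_arc harc')) harc'
  have hgoodv : ∀ j < n, wgood S T v j := by
    intro j hj
    have hkey := key j hj.le
    have harc : ArcOf (sysST S T (n - j - 1)) (trip S T u (n - j - 1)) (trip S T u (n - j)) := by
      have h := trip_arc (S := S) (T := T) (u := u) (show n - j - 1 < n by omega)
      rwa [show n - j - 1 + 1 = n - j by omega] at h
    have hp : (n - j - 1) % 2 = j % 2 := by omega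
    rw [wgood, hkey, ← sys_parity hp]
    exact onArch_of_arc harc.symm
  have hstuckv : ¬ wgood S T v n := by
    rw [wgood, key n (le_refl _), Nat.sub_self]
    rw [sys_odd hodd]
    exact hu
  have hlen : wlen S T v = n := wlen_eq hgoodv hstuckv
  refine ⟨key, hlen, ?_⟩
  rw [far, hlen, key n (le_refl _), Nat.sub_self]
  rfl

include hS hT in
/-- Reversal of an even walk (roles of the two systems swap). -/
lemma rev_even {u : W.ι} (hu : ¬ OnArch S u) (hev : wlen S T u % 2 = 0) :
    (∀ j ≤ wlen S T u, trip T S (far S T u) j = trip S T u (wlen S T u - j)) ∧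
      wlen T S (far S T u) = wlen S T u ∧ far T S (far S T u) = u := by
  set n := wlen S T u with hn
  set v := far S T u with hv
  have key : ∀ j, j ≤ n → trip T S v j = trip S T u (n - j) := by
    intro j
    induction j with
    | zero => intro _; rfl
    | succ j ih =>
        intro hj
        have ihj := ih (by omega)
        have harc : ArcOf (sysST S T (n - j - 1)) (trip S T u (n - j - 1)) (trip S T u (n - j)) := by
          have h := trip_arc (S := S) (T := T) (u := u) (show n - j - 1 < n by omega)
          rwa [show n - j - 1 + 1 = n - j by omega] at h
        have hp : (n - j - 1) % 2 = (j + 1) % 2 := by omega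
        have hsys : sysST S T (n - j - 1) = sysST T S j := by
          rw [sys_parity hp, ← sys_swap]
        have harc' : ArcOf (sysST T S j) (trip S T u (n - j)) (trip S T u (n - j - 1)) := by
          rw [← hsys]
          exact harc.symm
        have : trip T S v (j+1) = pr (sysST T S j) (trip S T u (n - j)) := by
          rw [show trip T S v (j+1) = pr (sysST T S j) (trip T S v j) from rfl, ihj]
        rw [this, show n - (j+1) = n - j - 1 by omega]
        exact arc_unique (sys_arch hT hS j) (pr_spec (onArch_of_arc harc')) harc'
  have hgoodv : ∀ j < n, wgood T S v j := by
    intro j hj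
    have hkey := key j hj.le
    have harc : ArcOf (sysST S T (n - j - 1)) (trip S T u (n - j - 1)) (trip S T u (n - j)) := by
      have h := trip_arc (S := S) (T := T) (u := u) (show n - j - 1 < n by omega)
      rwa [show n - j - 1 + 1 = n - j by omega] at h
    have hp : (n - j - 1) % 2 = (j + 1) % 2 := by omega
    rw [wgood, hkey, show sysST T S j = sysST S T (n - j - 1) by rw [sys_parity hp, ← sys_swap]]
    exact onArch_of_arc harc.symm
  have hstuckv : ¬ wgood T S v n := by
    rw [wgood, key n (le_refl _), Nat.sub_self]
    rw [show sysST T S n = S from sys_even (by omega)]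
    exact hu
  have hlen : wlen T S v = n := wlen_eq hgoodv hstuckv
  refine ⟨key, hlen, ?_⟩
  rw [far, hlen, key n (le_refl _), Nat.sub_self]
  rfl

include hS hT hW in
/-- Alignment: two alternating walks sharing a vertex. -/
lemma walk_align {u u' : W.ι} (hu : ¬ OnArch S u) (hu' : ¬ OnArch S u') :
    ∀ k, k ≤ wlen S T u → ∀ l, l ≤ wlen S T u' → trip S T u k = trip S T u' l →
      u = u' ∨ far S T u = u' ∨ far S T u' = u := by
  intro k
  induction k with
  | zero =>
      intro _ l hl heq
      rcases Nat.eq_zero_or_pos l with hl0 | hl0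
      · subst hl0
        exact Or.inl heq
      · have A1 : ArcOf (sysST S T (l-1)) (trip S T u' (l-1)) (trip S T u' l) := by
          have h := trip_arc (S := S) (T := T) (u := u') (show l - 1 < wlen S T u' by omega)
          rwa [show l - 1 + 1 = l by omega] at h
        have honu : OnArch (sysST S T (l-1)) u := by
          have heq0 : u = trip S T u' l := heq
          rw [heq0]
          exact onArch_of_arc A1.symm
        rcases Nat.mod_two_eq_zero_or_one (l-1) with hp | hp
        · -- in-edge has type T, so l is odd
          rcases Nat.lt_or_ge l (wlen S T u') with hlt | hge
          · -- out-edge at l has type S : contradiction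
            have A2 := trip_arc (S := S) (T := T) (u := u') hlt
            have : OnArch (sysST S T l) (trip S T u' l) := onArch_of_arc A2
            rw [sys_odd (show l % 2 = 1 by omega)] at this
            have heq0 : u = trip S T u' l := heq
            rw [← heq0] at this
            exact absurd this hu
          · have hl' : l = wlen S T u' := le_antisymm hl hge
            right; right
            have heq0 : u = trip S T u' l := heq
            rw [far, ← hl', ← heq0]
        · rw [sys_odd hp] at honu
          exact absurd honu hu
  | succ k IH =>
      intro hk l hl heq
      have A0 : ArcOf (sysST S T k) (trip S T u k) (trip S T u (k+1)) :=
        trip_arc (show k < wlen S T u by omega)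
      rcases Nat.eq_zero_or_pos l with hl0 | hl0
      · -- l = 0 : trip u (k+1) = u'
        subst hl0
        have heq0 : trip S T u (k+1) = u' := heq
        have honu : OnArch (sysST S T k) u' := by
          rw [← heq0]; exact onArch_of_arc A0.symm
        rcases Nat.mod_two_eq_zero_or_one k with hp | hp
        · rcases Nat.lt_or_ge (k+1) (wlen S T u) with hlt | hge
          · have A2 := trip_arc (S := S) (T := T) (u := u) hlt
            have : OnArch (sysST S T (k+1)) (trip S T u (k+1)) := onArch_of_arc A2
            rw [sys_odd (show (k+1) % 2 = 1 by omega), heq0] at this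
            exact absurd this hu'
          · have hk' : k + 1 = wlen S T u := le_antisymm hk hge
            right; left
            rw [far, ← hk', heq0]
        · rw [sys_odd hp] at honu
          exact absurd honu hu'
      · -- l ≥ 1
        by_cases hp : (l-1) % 2 = k % 2
        · have A1 : ArcOf (sysST S T (l-1)) (trip S T u' (l-1)) (trip S T u' l) := by
            have h := trip_arc (S := S) (T := T) (u := u') (show l - 1 < wlen S T u' by omega)
            rwa [show l - 1 + 1 = l by omega] at h
          have A1' : ArcOf (sysST S T k) (trip S T u (k+1)) (trip S T u' (l-1)) := by
            have h := A1.symm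
            rw [sys_parity (S := S) (T := T) hp] at h
            rw [← heq] at h
            exact h
          have he : trip S T u k = trip S T u' (l-1) :=
            arc_unique (sys_arch hS hT k) A0.symm A1'
          exact IH (by omega) (l-1) (by omega) he
        · have hp2 : l % 2 = k % 2 := by omega
          rcases Nat.lt_or_ge l (wlen S T u') with hlt | hge
          · have A2 : ArcOf (sysST S T l) (trip S T u' l) (trip S T u' (l+1)) :=
              trip_arc hlt
            have A2' : ArcOf (sysST S T k) (trip S T u (k+1)) (trip S T u' (l+1)) := by
              have h := A2
              rw [sys_parity (S := S) (T := T) hp2] at h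
              rw [← heq] at h
              exact h
            have he : trip S T u k = trip S T u' (l+1) :=
              arc_unique (sys_arch hS hT k) A0.symm A2'
            exact IH (by omega) (l+1) (by omega) he
          · have hl' : l = wlen S T u' := le_antisymm hl hge
            exfalso
            have hst := wlen_stuck hS hT hW hu'
            rw [← hl'] at hst
            apply hst
            rw [wgood, sys_parity hp2, ← heq]
            exact onArch_of_arc A0.symm

end CWord
namespace CWord

variable {X : Type} {W : CWord X}

/-- Sum over `S`-edges (odd steps) of endpoint indicators below `q`. -/
noncomputable def aSum (S T : Set (W.ι × W.ι)) (u q : W.ι) : ZMod 2 :=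
  ∑ k ∈ Finset.range (wlen S T u),
    if k % 2 = 1 then ch (trip S T u k < q) + ch (trip S T u (k+1) < q) else 0

/-- Sum over `T`-edges (even steps) of endpoint indicators below `q`. -/
noncomputable def bSum (S T : Set (W.ι × W.ι)) (u q : W.ι) : ZMod 2 :=
  ∑ k ∈ Finset.range (wlen S T u),
    if k % 2 = 0 then ch (trip S T u k < q) + ch (trip S T u (k+1) < q) else 0

/-- Sum over `S`-edges of straddle indicators. -/
noncomputable def saSum (S T : Set (W.ι × W.ι)) (u r : W.ι) : ZMod 2 :=
  ∑ k ∈ Finset.range (wlen S T u),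
    if k % 2 = 1 then ch (Btw (trip S T u k) (trip S T u (k+1)) r) else 0

/-- Sum over `T`-edges of straddle indicators. -/
noncomputable def sbSum (S T : Set (W.ι × W.ι)) (u r : W.ι) : ZMod 2 :=
  ∑ k ∈ Finset.range (wlen S T u),
    if k % 2 = 0 then ch (Btw (trip S T u k) (trip S T u (k+1)) r) else 0

lemma sum_split (S T : Set (W.ι × W.ι)) (u q : W.ι) :
    aSum S T u q + bSum S T u q = ch (u < q) + ch (far S T u < q) := by
  rw [aSum, bSum, ← Finset.sum_add_distrib]
  have : ∀ k ∈ Finset.range (wlen S T u),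
      ((if k % 2 = 1 then ch (trip S T u k < q) + ch (trip S T u (k+1) < q) else 0) +
        (if k % 2 = 0 then ch (trip S T u k < q) + ch (trip S T u (k+1) < q) else 0)) =
      (fun j => ch (trip S T u j < q)) k + (fun j => ch (trip S T u j < q)) (k+1) := by
    intro k _
    rcases Nat.mod_two_eq_zero_or_one k with h | h
    · rw [if_neg (by omega), if_pos h, zero_add]
    · rw [if_pos h, if_neg (by omega), add_zero]
  rw [Finset.sum_congr rfl this, ts (fun j => ch (trip S T u j < q)) (wlen S T u)]
  rfl

variable {S T : Set (W.ι × W.ι)} (hS : IsArchSystem W S) (hT : IsArchSystem W T)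

lemma ch_eq_zero {p : Prop} (h : ¬ p) : ch p = 0 := by rw [ch, if_neg h]

lemma z2a {a b c d : ZMod 2} (h : a + b = c + d) : a + c = b + d := by
  revert a b c d; decide

lemma z2b {a b c d : ZMod 2} (h : a + b = c + d) : a = b + c + d := by
  revert a b c d; decide

include hS in
lemma aSum_eval {u r : W.ι} (hr : ¬ OnArch S r) : aSum S T u r = 0 := by
  refine Finset.sum_eq_zero fun k hk => ?_
  rcases Nat.mod_two_eq_zero_or_one k with h | h
  · rw [if_neg (by omega)]
  · rw [if_pos h]
    have harc : ArcOf S (trip S T u k) (trip S T u (k+1)) := by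
      have := trip_arc (S := S) (T := T) (u := u) (Finset.mem_range.1 hk)
      rwa [sys_odd h] at this
    have h1 : r ≠ trip S T u k := fun he => hr (he ▸ onArch_of_arc harc)
    have h2 : r ≠ trip S T u (k+1) := fun he => hr (he ▸ onArch_of_arc harc.symm)
    rw [ch_conv' h1 h2]
    exact ch_eq_zero (not_btw_of_unmatched hS hr harc)

include hT in
lemma bSum_eval {u r : W.ι} (hr : ¬ OnArch T r) : bSum S T u r = 0 := by
  refine Finset.sum_eq_zero fun k hk => ?_
  rcases Nat.mod_two_eq_zero_or_one k with h | h
  · rw [if_pos h]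
    have harc : ArcOf T (trip S T u k) (trip S T u (k+1)) := by
      have := trip_arc (S := S) (T := T) (u := u) (Finset.mem_range.1 hk)
      rwa [sys_even h] at this
    have h1 : r ≠ trip S T u k := fun he => hr (he ▸ onArch_of_arc harc)
    have h2 : r ≠ trip S T u (k+1) := fun he => hr (he ▸ onArch_of_arc harc.symm)
    rw [ch_conv' h1 h2]
    exact ch_eq_zero (not_btw_of_unmatched hT hr harc)
  · rw [if_neg (by omega)]

include hS in
lemma saSum_eval {u r : W.ι} (hr : ¬ OnArch S r) : saSum S T u r = 0 := by
  refine Finset.sum_eq_zero fun k hk => ?_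
  rcases Nat.mod_two_eq_zero_or_one k with h | h
  · rw [if_neg (by omega)]
  · rw [if_pos h]
    have harc : ArcOf S (trip S T u k) (trip S T u (k+1)) := by
      have := trip_arc (S := S) (T := T) (u := u) (Finset.mem_range.1 hk)
      rwa [sys_odd h] at this
    exact ch_eq_zero (not_btw_of_unmatched hS hr harc)

include hS in
/-- Pair step for `aSum` across an `S`-arc whose ends avoid the walk. -/
lemma aSum_pair {u s t : W.ι} (harc : ArcOf S s t)
    (hs : ∀ k ≤ wlen S T u, trip S T u k ≠ s) (ht : ∀ k ≤ wlen S T u, trip S T u k ≠ t) :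
    aSum S T u s + aSum S T u t = 0 := by
  rw [aSum, aSum, ← Finset.sum_add_distrib]
  refine Finset.sum_eq_zero fun k hk => ?_
  rcases Nat.mod_two_eq_zero_or_one k with h | h
  · rw [if_neg (by omega), if_neg (by omega), add_zero]
  · rw [if_pos h, if_pos h]
    have hkr := Finset.mem_range.1 hk
    have harc' : ArcOf S (trip S T u k) (trip S T u (k+1)) := by
      have := trip_arc (S := S) (T := T) (u := u) hkr
      rwa [sys_odd h] at this
    have hnc := ch_nc hS harc' harc (hs k hkr.le) (ht k hkr.le)
      (hs (k+1) hkr) (ht (k+1) hkr)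
    linear_combination hnc

include hT in
/-- Pair step for `bSum` across a `T`-arc whose ends avoid the walk. -/
lemma bSum_pair {u s t : W.ι} (harc : ArcOf T s t)
    (hs : ∀ k ≤ wlen S T u, trip S T u k ≠ s) (ht : ∀ k ≤ wlen S T u, trip S T u k ≠ t) :
    bSum S T u s + bSum S T u t = 0 := by
  rw [bSum, bSum, ← Finset.sum_add_distrib]
  refine Finset.sum_eq_zero fun k hk => ?_
  rcases Nat.mod_two_eq_zero_or_one k with h | h
  · rw [if_pos h, if_pos h]
    have hkr := Finset.mem_range.1 hk
    have harc' : ArcOf T (trip S T u k) (trip S T u (k+1)) := by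
      have := trip_arc (S := S) (T := T) (u := u) hkr
      rwa [sys_even h] at this
    have hnc := ch_nc hT harc' harc (hs k hkr.le) (ht k hkr.le)
      (hs (k+1) hkr) (ht (k+1) hkr)
    linear_combination hnc
  · rw [if_neg (by omega), if_neg (by omega), add_zero]

include hS hT in
/-- Engine 1: telescoping an even-type potential along another walk. -/
lemma eng1 {u u' : W.ι} (hu : ¬ OnArch S u) (hv : ¬ OnArch T (far S T u))
    (hdisj : ∀ k ≤ wlen S T u, ∀ l ≤ wlen S T u', trip S T u k ≠ trip S T u' l) :
    aSum S T u u' + ch (u < u') = aSum S T u (far S T u') + ch (u < far S T u') := by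
  have FG : ∀ q, aSum S T u q + ch (u < q) = bSum S T u q + ch (far S T u < q) :=
    fun q => z2a (sum_split S T u q)
  have key : ∀ l ∈ Finset.range (wlen S T u'),
      ((fun j => aSum S T u (trip S T u' j) + ch (u < trip S T u' j)) l +
       (fun j => aSum S T u (trip S T u' j) + ch (u < trip S T u' j)) (l+1)) = 0 := by
    intro l hl
    have hlr := Finset.mem_range.1 hl
    have hs1 : ∀ k ≤ wlen S T u, trip S T u k ≠ trip S T u' l :=
      fun k hk => hdisj k hk l hlr.le
    have hs2 : ∀ k ≤ wlen S T u, trip S T u k ≠ trip S T u' (l+1) :=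
      fun k hk => hdisj k hk (l+1) hlr
    rcases Nat.mod_two_eq_zero_or_one l with h | h
    · -- T-edge : use the G form
      have harc : ArcOf T (trip S T u' l) (trip S T u' (l+1)) := by
        have := trip_arc (S := S) (T := T) (u := u') hlr
        rwa [sys_even h] at this
      have e1 := FG (trip S T u' l)
      have e2 := FG (trip S T u' (l+1))
      have hb := bSum_pair hT harc hs1
        hs2
      have hfar1 : far S T u ≠ trip S T u' l := hs1 (wlen S T u) (le_refl _)
      have hfar2 : far S T u ≠ trip S T u' (l+1) :=
        hs2 (wlen S T u) (le_refl _)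
      have hc := ch_conv hfar1 hfar2
      have hz := ch_eq_zero (not_btw_of_unmatched hT hv harc)
      show (aSum S T u (trip S T u' l) + ch (u < trip S T u' l)) +
        (aSum S T u (trip S T u' (l+1)) + ch (u < trip S T u' (l+1))) = 0
      linear_combination e1 + e2 + hb + hc + hz
    · -- S-edge
      have harc : ArcOf S (trip S T u' l) (trip S T u' (l+1)) := by
        have := trip_arc (S := S) (T := T) (u := u') hlr
        rwa [sys_odd h] at this
      have ha := aSum_pair hS harc hs1
        hs2
      have hune1 : u ≠ trip S T u' l := hs1 0 (Nat.zero_le _)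
      have hune2 : u ≠ trip S T u' (l+1) := hs2 0 (Nat.zero_le _)
      have hc := ch_conv hune1 hune2
      have hz := ch_eq_zero (not_btw_of_unmatched hS hu harc)
      show (aSum S T u (trip S T u' l) + ch (u < trip S T u' l)) +
        (aSum S T u (trip S T u' (l+1)) + ch (u < trip S T u' (l+1))) = 0
      linear_combination ha + hc + hz
  have := ts (fun j => aSum S T u (trip S T u' j) + ch (u < trip S T u' j)) (wlen S T u')
  rw [Finset.sum_congr rfl key] at this
  simp only [Finset.sum_const_zero] at this
  have h0 : aSum S T u (trip S T u' 0) + ch (u < trip S T u' 0) =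
      aSum S T u u' + ch (u < u') := rfl
  rw [h0] at this
  exact (zmod2_add_eq_zero_iff.1 this.symm)

include hS hT in
/-- Engine 2: telescoping the pure `aSum` of an odd walk along another walk. -/
lemma eng2 {u u' : W.ι}
    (hdisj : ∀ k ≤ wlen S T u, ∀ l ≤ wlen S T u', trip S T u k ≠ trip S T u' l) :
    aSum S T u u' + aSum S T u (far S T u') =
      sbSum S T u' u + sbSum S T u' (far S T u) := by
  have FG : ∀ q, aSum S T u q = bSum S T u q + ch (u < q) + ch (far S T u < q) :=
    fun q => z2b (sum_split S T u q)
  have key : ∀ l ∈ Finset.range (wlen S T u'),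
      ((fun j => aSum S T u (trip S T u' j)) l + (fun j => aSum S T u (trip S T u' j)) (l+1)) =
      ((if l % 2 = 0 then ch (Btw (trip S T u' l) (trip S T u' (l+1)) u) else 0) +
       (if l % 2 = 0 then ch (Btw (trip S T u' l) (trip S T u' (l+1)) (far S T u)) else 0)) := by
    intro l hl
    have hlr := Finset.mem_range.1 hl
    have hs1 : ∀ k ≤ wlen S T u, trip S T u k ≠ trip S T u' l :=
      fun k hk => hdisj k hk l hlr.le
    have hs2 : ∀ k ≤ wlen S T u, trip S T u k ≠ trip S T u' (l+1) :=
      fun k hk => hdisj k hk (l+1) hlr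
    rcases Nat.mod_two_eq_zero_or_one l with h | h
    · have harc : ArcOf T (trip S T u' l) (trip S T u' (l+1)) := by
        have := trip_arc (S := S) (T := T) (u := u') hlr
        rwa [sys_even h] at this
      have e1 := FG (trip S T u' l)
      have e2 := FG (trip S T u' (l+1))
      have hb := bSum_pair hT harc hs1
        hs2
      have hu1 : u ≠ trip S T u' l := hs1 0 (Nat.zero_le _)
      have hu2 : u ≠ trip S T u' (l+1) := hs2 0 (Nat.zero_le _)
      have hf1 : far S T u ≠ trip S T u' l := hs1 (wlen S T u) (le_refl _)
      have hf2 : far S T u ≠ trip S T u' (l+1) :=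
        hs2 (wlen S T u) (le_refl _)
      have hc1 := ch_conv hu1 hu2
      have hc2 := ch_conv hf1 hf2
      rw [if_pos h, if_pos h]
      show aSum S T u (trip S T u' l) + aSum S T u (trip S T u' (l+1)) = _
      linear_combination e1 + e2 + hb + hc1 + hc2
    · have harc : ArcOf S (trip S T u' l) (trip S T u' (l+1)) := by
        have := trip_arc (S := S) (T := T) (u := u') hlr
        rwa [sys_odd h] at this
      have ha := aSum_pair hS harc hs1
        hs2
      rw [if_neg (by omega), if_neg (by omega), add_zero]
      show aSum S T u (trip S T u' l) + aSum S T u (trip S T u' (l+1)) = 0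
      linear_combination ha
  have := ts (fun j => aSum S T u (trip S T u' j)) (wlen S T u')
  rw [Finset.sum_congr rfl key] at this
  rw [Finset.sum_add_distrib] at this
  exact this.symm

include hS hT in
/-- Straddle parity: total straddle count of a walk at an outside point. -/
lemma straddle_eval {u' r : W.ι} (hr : ∀ l ≤ wlen S T u', r ≠ trip S T u' l) :
    saSum S T u' r + sbSum S T u' r = ch (Btw u' (far S T u') r) := by
  have key : ∀ l ∈ Finset.range (wlen S T u'),
      ((if l % 2 = 1 then ch (Btw (trip S T u' l) (trip S T u' (l+1)) r) else 0) +
       (if l % 2 = 0 then ch (Btw (trip S T u' l) (trip S T u' (l+1)) r) else 0)) =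
      (fun j => ch (trip S T u' j < r)) l + (fun j => ch (trip S T u' j < r)) (l+1) := by
    intro l hl
    have hlr := Finset.mem_range.1 hl
    have hc := ch_conv' (x := r) (hr l hlr.le) (hr (l+1) hlr)
    rcases Nat.mod_two_eq_zero_or_one l with h | h
    · rw [if_neg (by omega), if_pos h, zero_add]
      exact hc.symm
    · rw [if_pos h, if_neg (by omega), add_zero]
      exact hc.symm
  rw [saSum, sbSum, ← Finset.sum_add_distrib, Finset.sum_congr rfl key,
    ts (fun j => ch (trip S T u' j < r)) (wlen S T u')]
  exact ch_conv' (hr 0 (Nat.zero_le _)) (hr (wlen S T u') (le_refl _))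

end CWord
namespace CWord

variable {X : Type} {W : CWord X}
variable {S T : Set (W.ι × W.ι)} (hS : IsArchSystem W S) (hT : IsArchSystem W T)
  (hW : Restricted W)

include hS hT in
lemma far_eq_self {u : W.ι} (h0 : wlen S T u = 0) : far S T u = u := by
  rw [far, h0]; rfl

include hS hT in
lemma far_onArch_S_of_even_pos {u : W.ι} (he : wlen S T u % 2 = 0) (h0 : 0 < wlen S T u) :
    OnArch S (far S T u) := by
  have hm := far_matched hS hT (u := u) h0
  rwa [sys_odd (show (wlen S T u - 1) % 2 = 1 by omega)] at hm

include hS hT hW in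
lemma disj_of_ne_far {u u' : W.ι} (hu : ¬ OnArch S u) (hu' : ¬ OnArch S u')
    (h1 : u ≠ u') (h2 : far S T u ≠ u') (h3 : far S T u' ≠ u) :
    ∀ k ≤ wlen S T u, ∀ l ≤ wlen S T u', trip S T u k ≠ trip S T u' l := by
  intro k hk l hl heq
  rcases walk_align hS hT hW hu hu' k hk l hl heq with h | h | h
  · exact h1 h
  · exact h2 h
  · exact h3 h

include hS hT hW in
lemma disj_of_even {u u' : W.ι} (hu : ¬ OnArch S u) (hu' : ¬ OnArch S u')
    (hne : u ≠ u') (he : wlen S T u % 2 = 0) (he' : wlen S T u' % 2 = 0) :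
    ∀ k ≤ wlen S T u, ∀ l ≤ wlen S T u', trip S T u k ≠ trip S T u' l := by
  refine disj_of_ne_far hS hT hW hu hu' hne ?_ ?_
  · intro h
    rcases Nat.eq_zero_or_pos (wlen S T u) with h0 | h0
    · exact hne ((far_eq_self hS hT h0).symm.trans h)
    · exact hu' (h ▸ far_onArch_S_of_even_pos hS hT he h0)
  · intro h
    rcases Nat.eq_zero_or_pos (wlen S T u') with h0 | h0
    · exact hne ((far_eq_self hS hT h0).symm.trans h).symm
    · exact hu (h ▸ far_onArch_S_of_even_pos hS hT he' h0)

include hS hT hW in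
/-- T3: the endpoint map of even walks is order-preserving. -/
lemma order_pres {u u' : W.ι} (hu : ¬ OnArch S u) (hu' : ¬ OnArch S u')
    (hne : u ≠ u') (he : wlen S T u % 2 = 0) (he' : wlen S T u' % 2 = 0) :
    u < u' ↔ far S T u < far S T u' := by
  have hdisj := disj_of_even hS hT hW hu hu' hne he he'
  have hv : ¬ OnArch T (far S T u) := far_unmatched_even hS hT hW hu he
  have hv' : ¬ OnArch T (far S T u') := far_unmatched_even hS hT hW hu' he'
  have h1 := eng1 hS hT hu hv hdisj
  have e0 := aSum_eval hS (u := u) (T := T) hu'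
  have eF := z2a (sum_split S T u (far S T u'))
  have eB := bSum_eval hT (u := u) (S := S) hv'
  refine ch_inj ?_
  linear_combination h1 + eF - e0 + eB

include hS hT hW in
/-- ✱: the start of an even walk is not strictly between the ends of an odd walk. -/
lemma star {u u' : W.ι} (hu : ¬ OnArch S u) (hu' : ¬ OnArch S u')
    (he : wlen S T u % 2 = 0) (ho' : wlen S T u' % 2 = 1)
    (hdisj : ∀ k ≤ wlen S T u, ∀ l ≤ wlen S T u', trip S T u k ≠ trip S T u' l) :
    ¬ Btw u' (far S T u') u := by
  have hv : ¬ OnArch T (far S T u) := far_unmatched_even hS hT hW hu he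
  have hw' : ¬ OnArch S (far S T u') := far_unmatched_odd hS hT hW hu' ho'
  have h1 := eng1 hS hT hu hv hdisj
  have e0 := aSum_eval hS (u := u) (T := T) hu'
  have e1 := aSum_eval hS (u := u) (T := T) hw'
  have hiff : (u < u') ↔ (u < far S T u') := ch_inj (by linear_combination h1 - e0 + e1)
  rintro (⟨a, b⟩ | ⟨a, b⟩)
  · exact absurd (hiff.2 b) (not_lt.2 a.le)
  · exact absurd (hiff.1 b) (not_lt.2 a.le)

include hS hT hW in
/-- ★★: the two ends of an odd walk are on the same side of another odd walk. -/
lemma starstar {u u' : W.ι} (hu : ¬ OnArch S u) (hu' : ¬ OnArch S u')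
    (ho : wlen S T u % 2 = 1) (ho' : wlen S T u' % 2 = 1)
    (hdisj : ∀ k ≤ wlen S T u, ∀ l ≤ wlen S T u', trip S T u k ≠ trip S T u' l) :
    Btw u' (far S T u') u ↔ Btw u' (far S T u') (far S T u) := by
  have hw : ¬ OnArch S (far S T u) := far_unmatched_odd hS hT hW hu ho
  have hw' : ¬ OnArch S (far S T u') := far_unmatched_odd hS hT hW hu' ho'
  have h2 := eng2 hS hT hdisj
  have e0 := aSum_eval hS (u := u) (T := T) hu'
  have e1 := aSum_eval hS (u := u) (T := T) hw'
  have s1 := straddle_eval hS hT (u' := u') (r := u)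
    (fun l hl => (hdisj 0 (Nat.zero_le _) l hl : u ≠ _))
  have s2 := straddle_eval hS hT (u' := u') (r := far S T u)
    (fun l hl => (hdisj (wlen S T u) (le_refl _) l hl : far S T u ≠ _))
  have sa1 := saSum_eval hS (u := u') (T := T) hu
  have sa2 := saSum_eval hS (u := u') (T := T) hw
  have hsb1 : sbSum S T u' u = ch (Btw u' (far S T u') u) := by
    rw [← s1, sa1, zero_add]
  have hsb2 : sbSum S T u' (far S T u) = ch (Btw u' (far S T u') (far S T u)) := by
    rw [← s2, sa2, zero_add]
  have h0 : sbSum S T u' u + sbSum S T u' (far S T u) = 0 := by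
    rw [← h2, e0, e1, add_zero]
  exact ch_inj (by rw [← hsb1, ← hsb2]; exact zmod2_add_eq_zero_iff.1 h0)

end CWord
namespace CWord

variable {X : Type} {W : CWord X}

/-- Ends of an odd maximal walk. -/
def oddPair (S T : Set (W.ι × W.ι)) (i j : W.ι) : Prop :=
  ¬ OnArch S i ∧ wlen S T i % 2 = 1 ∧ far S T i = j

/-- Unordered odd-pair relation. -/
def pairRel (S T : Set (W.ι × W.ι)) (i j : W.ι) : Prop :=
  oddPair S T i j ∨ oddPair S T j i

/-- The candidate new arches: ordered ends of odd walks. -/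
def sigmaSet (S T : Set (W.ι × W.ι)) : Set (W.ι × W.ι) :=
  {p | p.1 < p.2 ∧ pairRel S T p.1 p.2}

variable {S T : Set (W.ι × W.ι)} (hS : IsArchSystem W S) (hT : IsArchSystem W T)
  (hW : Restricted W)

lemma btw_of_lt {i j x : W.ι} (hij : i < j) : Btw i j x ↔ (i < x ∧ x < j) := by
  constructor
  · rintro (⟨a, b⟩ | ⟨a, b⟩)
    · exact ⟨a, b⟩
    · exact absurd (hij.trans (a.trans b)) (lt_irrefl _)
  · exact Or.inl

include hS hT hW in
lemma oddPair_symm' {i j : W.ι} (h : oddPair S T i j) : oddPair S T j i := by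
  obtain ⟨hu, ho, hf⟩ := h
  obtain ⟨_, hlen, hff⟩ := rev_odd hS hT hu ho
  refine ⟨?_, ?_, ?_⟩
  · rw [← hf]; exact far_unmatched_odd hS hT hW hu ho
  · rw [← hf, hlen]; exact ho
  · rw [← hf, hff]

include hS hT hW in
lemma pairRel_symm {i j : W.ι} (h : pairRel S T i j) : pairRel S T j i := Or.symm h

lemma oddPair_det {i j k : W.ι} (h1 : oddPair S T i j) (h2 : oddPair S T i k) : j = k := by
  rw [← h1.2.2, ← h2.2.2]

include hS hT hW in
lemma pairRel_det {i j k : W.ι} (h1 : pairRel S T i j) (h2 : pairRel S T i k) : j = k := by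
  have n1 : oddPair S T i j := h1.elim id (oddPair_symm' hS hT hW)
  have n2 : oddPair S T i k := h2.elim id (oddPair_symm' hS hT hW)
  exact oddPair_det n1 n2

include hS hT in
lemma oddPair_ne {i j : W.ι} (h : oddPair S T i j) : i ≠ j := by
  rw [← h.2.2]
  have ho := h.2.1
  exact far_ne hS hT h.1 (by omega)

include hS hT hW in
lemma pairRel_unmatched {i j : W.ι} (h : pairRel S T i j) : ¬ OnArch S i ∧ ¬ OnArch S j := by
  have n1 : oddPair S T i j := h.elim id (oddPair_symm' hS hT hW)
  have n2 : oddPair S T j i := oddPair_symm' hS hT hW n1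
  exact ⟨n1.1, n2.1⟩

include hS hT hW in
lemma pairRel_btw_iff {i j k l : W.ι} (hij : pairRel S T i j) (hkl : pairRel S T k l)
    (d1 : k ≠ i) (d2 : k ≠ j) (d3 : l ≠ i) (d4 : l ≠ j) :
    Btw i j k ↔ Btw i j l := by
  -- normalize both to oddPair form
  have nij : oddPair S T i j := hij.elim id (oddPair_symm' hS hT hW)
  have nkl : oddPair S T k l := hkl.elim id (oddPair_symm' hS hT hW)
  have hdisj : ∀ a ≤ wlen S T k, ∀ b ≤ wlen S T i, trip S T k a ≠ trip S T i b := by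
    refine disj_of_ne_far hS hT hW nkl.1 nij.1 d1 ?_ ?_
    · rw [nkl.2.2]; exact d3
    · rw [nij.2.2]; exact d2.symm
  have hss := starstar hS hT hW nkl.1 nij.1 nkl.2.1 nij.2.1 hdisj
  rw [nij.2.2, nkl.2.2] at hss
  exact hss

end CWord
namespace CWord

variable {X : Type} {W : CWord X}
variable {S T : Set (W.ι × W.ι)} (hS : IsArchSystem W S) (hT : IsArchSystem W T)
  (hW : Restricted W)

include hS hT hW in
lemma letter_oddPair {i j : W.ι} (h : oddPair S T i j) :
    W.letter j = invLetter (W.letter i) := by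
  rw [← h.2.2, far_letter hS hT, if_neg (by have := h.2.1; omega)]

include hS hT hW in
/-- T2: if `S` is maximal, every alternating walk from an `S`-unmatched vertex is even. -/
lemma no_odd (hmax : Maximal (IsArchSystem W) S) {u : W.ι} (hu : ¬ OnArch S u) :
    wlen S T u % 2 = 0 := by
  rcases Nat.mod_two_eq_zero_or_one (wlen S T u) with h | ho
  · exact h
  exfalso
  have unmSg : ∀ p ∈ sigmaSet S T, ¬ OnArch S p.1 ∧ ¬ OnArch S p.2 :=
    fun p hp => pairRel_unmatched hS hT hW hp.2
  have onS : ∀ a ∈ S, OnArch S a.1 ∧ OnArch S a.2 :=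
    fun a ha => ⟨⟨a, ha, Or.inl rfl⟩, ⟨a, ha, Or.inr rfl⟩⟩
  have harch : IsArchSystem W (S ∪ sigmaSet S T) := by
    refine ⟨?_, ?_, ?_, ?_, ?_⟩
    · rintro a (ha | ha)
      · exact hS.lt _ ha
      · exact ha.1
    · rintro a (ha | ha)
      · exact hS.inv_letters _ ha
      · rcases ha.2 with hp | hp
        · exact letter_oddPair hS hT hW hp
        · rw [letter_oddPair hS hT hW hp, invLetter_invol]
    · rintro a (ha | ha) b (hb | hb) hne
      · exact hS.disjointEnds _ ha _ hb hne
      · exact ⟨fun he => (unmSg b hb).1 (he ▸ (onS a ha).1),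
          fun he => (unmSg b hb).2 (he ▸ (onS a ha).1),
          fun he => (unmSg b hb).1 (he ▸ (onS a ha).2),
          fun he => (unmSg b hb).2 (he ▸ (onS a ha).2)⟩
      · exact ⟨fun he => (unmSg a ha).1 (he ▸ (onS b hb).1),
          fun he => (unmSg a ha).1 (he ▸ (onS b hb).2),
          fun he => (unmSg a ha).2 (he ▸ (onS b hb).1),
          fun he => (unmSg a ha).2 (he ▸ (onS b hb).2)⟩
      · refine ⟨?_, ?_, ?_, ?_⟩
        · intro he
          have hd : a.2 = b.2 := pairRel_det hS hT hW (he ▸ ha.2) hb.2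
          exact hne (Prod.ext he hd)
        · intro he
          have hd : a.2 = b.1 :=
            pairRel_det hS hT hW (he ▸ ha.2) (pairRel_symm hS hT hW hb.2)
          have := ha.1
          rw [hd] at this
          exact absurd (this.trans hb.1) (by rw [he]; exact lt_irrefl _)
        · intro he
          have hd : a.1 = b.2 :=
            pairRel_det hS hT hW (he ▸ (pairRel_symm hS hT hW ha.2)) hb.2
          have := ha.1
          rw [hd, he] at this
          exact absurd (hb.1.trans this) (lt_irrefl _)
        · intro he
          have hd : a.1 = b.1 :=
            pairRel_det hS hT hW (he ▸ (pairRel_symm hS hT hW ha.2))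
              (pairRel_symm hS hT hW hb.2)
          exact hne (Prod.ext hd he)
    · rintro a (ha | ha) b (hb | hb) ⟨c1, c2, c3⟩
      · exact hS.noncrossing _ ha _ hb ⟨c1, c2, c3⟩
      · have harc : ArcOf S a.1 a.2 := Or.inl (by rw [Prod.mk.eta]; exact ha)
        exact (unmSg b hb).1 (onArch_of_btw hS harc (Or.inl ⟨c1, c2⟩))
      · have harc : ArcOf S b.1 b.2 := Or.inl (by rw [Prod.mk.eta]; exact hb)
        exact (unmSg a ha).2 (onArch_of_btw hS harc (Or.inl ⟨c2, c3⟩))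
      · have hiff := pairRel_btw_iff hS hT hW ha.2 hb.2 c1.ne' c2.ne
          ((c1.trans (c2.trans c3)).ne') c3.ne'
        have hbl : Btw a.1 a.2 b.2 := hiff.1 (Or.inl ⟨c1, c2⟩)
        rcases hbl with ⟨_, y⟩ | ⟨_, y⟩
        · exact absurd (c3.trans y) (lt_irrefl _)
        · exact absurd (((c1.trans c2).trans c3).trans y) (lt_irrefl _)
    · rintro a (ha | ha) k h1 h2
      · obtain ⟨b, hb, hc⟩ := hS.nested _ ha k h1 h2
        exact ⟨b, Or.inl hb, hc⟩
      · have kni : k ≠ a.1 := h1.ne'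
        have knj : k ≠ a.2 := h2.ne
        by_cases hok : OnArch S k
        · obtain ⟨y, hy⟩ := onArch_iff.1 hok
          have hy1 : a.1 < y := by
            rcases lt_trichotomy y a.1 with hc | hc | hc
            · exact absurd (onArch_of_btw hS hy (Or.inr ⟨hc, h1⟩)) (unmSg a ha).1
            · exact absurd (hc ▸ onArch_of_arc hy.symm) (unmSg a ha).1
            · exact hc
          have hy2 : y < a.2 := by
            rcases lt_trichotomy a.2 y with hc | hc | hc
            · exact absurd (onArch_of_btw hS hy (Or.inl ⟨h2, hc⟩)) (unmSg a ha).2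
            · exact absurd (hc ▸ onArch_of_arc hy.symm) (unmSg a ha).2
            · exact hc
          rcases hy with hy | hy
          · exact ⟨(k, y), Or.inl hy, Or.inl ⟨rfl, hy1, hy2⟩⟩
          · exact ⟨(y, k), Or.inl hy, Or.inr ⟨rfl, hy1, hy2⟩⟩
        · have nij : oddPair S T a.1 a.2 := ha.2.elim id (oddPair_symm' hS hT hW)
          have hfk1 : far S T k ≠ a.1 := by
            intro he
            rcases Nat.mod_two_eq_zero_or_one (wlen S T k) with hev | hodk
            · rcases Nat.eq_zero_or_pos (wlen S T k) with h0 | h0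
              · exact kni ((far_eq_self hS hT h0).symm.trans he)
              · exact (unmSg a ha).1 (he ▸ far_onArch_S_of_even_pos hS hT hev h0)
            · have hop : oddPair S T k (far S T k) := ⟨hok, hodk, rfl⟩
              rw [he] at hop
              exact knj (pairRel_det hS hT hW (Or.inr hop) ha.2)
          have hfk2 : far S T k ≠ a.2 := by
            intro he
            rcases Nat.mod_two_eq_zero_or_one (wlen S T k) with hev | hodk
            · rcases Nat.eq_zero_or_pos (wlen S T k) with h0 | h0
              · exact knj ((far_eq_self hS hT h0).symm.trans he)
              · exact (unmSg a ha).2 (he ▸ far_onArch_S_of_even_pos hS hT hev h0)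
            · have hop : oddPair S T k (far S T k) := ⟨hok, hodk, rfl⟩
              rw [he] at hop
              exact kni (pairRel_det hS hT hW (Or.inr hop)
                (pairRel_symm hS hT hW ha.2))
          have hdisj : ∀ x ≤ wlen S T k, ∀ y ≤ wlen S T a.1,
              trip S T k x ≠ trip S T a.1 y := by
            refine disj_of_ne_far hS hT hW hok nij.1 kni hfk1 ?_
            rw [nij.2.2]
            exact knj.symm
          have hodk : wlen S T k % 2 = 1 := by
            rcases Nat.mod_two_eq_zero_or_one (wlen S T k) with hev | hodk
            · exfalso
              have hst := star hS hT hW hok nij.1 hev nij.2.1 hdisj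
              rw [nij.2.2] at hst
              exact hst (Or.inl ⟨h1, h2⟩)
            · exact hodk
          have hss := starstar hS hT hW hok nij.1 hodk nij.2.1 hdisj
          rw [nij.2.2] at hss
          have hfar_in := (btw_of_lt ha.1).1 (hss.1 (Or.inl ⟨h1, h2⟩))
          have hpk : pairRel S T k (far S T k) := Or.inl ⟨hok, hodk, rfl⟩
          rcases (far_ne hS hT hok (by omega)).lt_or_gt with hlt | hgt
          · exact ⟨(k, far S T k), Or.inr ⟨hlt, hpk⟩, Or.inl ⟨rfl, hfar_in.1, hfar_in.2⟩⟩
          · exact ⟨(far S T k, k), Or.inr ⟨hgt, pairRel_symm hS hT hW hpk⟩,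
              Or.inr ⟨rfl, hfar_in.1, hfar_in.2⟩⟩
  have hne := far_ne hS hT hu (by omega)
  have hpru : pairRel S T u (far S T u) := Or.inl ⟨hu, ho, rfl⟩
  have hsub : S ∪ sigmaSet S T ⊆ S := hmax.2 harch Set.subset_union_left
  rcases hne.lt_or_gt with hlt | hgt
  · exact hu ⟨(u, far S T u), hsub (Or.inr ⟨hlt, hpru⟩), Or.inl rfl⟩
  · exact hu ⟨(far S T u, u), hsub (Or.inr ⟨hgt, pairRel_symm hS hT hW hpru⟩), Or.inr rfl⟩

end CWord
namespace CWord

variable {X : Type} {W : CWord X}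

/-- The complements of two maximal arch systems are equivalent words. -/
lemma equiv_restrict_of_maximal {A B : Set (W.ι × W.ι)} (hW : Restricted W)
    (hA : Maximal (IsArchSystem W) A) (hB : Maximal (IsArchSystem W) B) :
    Equiv (W.restrict {i | ¬ OnArch A i}) (W.restrict {i | ¬ OnArch B i}) := by
  have hSa : IsArchSystem W A := hA.1
  have hSb : IsArchSystem W B := hB.1
  have heven : ∀ u : W.ι, ¬ OnArch A u → wlen A B u % 2 = 0 :=
    fun u hu => no_odd hSa hSb hW hA hu
  have heven' : ∀ v : W.ι, ¬ OnArch B v → wlen B A v % 2 = 0 :=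
    fun v hv => no_odd hSb hSa hW hB hv
  let f : {i | ¬ OnArch A i} → {i | ¬ OnArch B i} :=
    fun u => ⟨far A B u.1, far_unmatched_even hSa hSb hW u.2 (heven u.1 u.2)⟩
  let g : {i | ¬ OnArch B i} → {i | ¬ OnArch A i} :=
    fun v => ⟨far B A v.1, far_unmatched_even hSb hSa hW v.2 (heven' v.1 v.2)⟩
  have hgf : ∀ u, g (f u) = u := by
    intro u
    have := (rev_even hSa hSb u.2 (heven u.1 u.2)).2.2
    exact Subtype.ext this
  have hfg : ∀ v, f (g v) = v := by
    intro v
    have := (rev_even hSb hSa v.2 (heven' v.1 v.2)).2.2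
    exact Subtype.ext this
  have hmono : StrictMono f := by
    intro u u' hlt
    have hne : u.1 ≠ u'.1 := fun he => absurd (Subtype.ext he ▸ hlt) (lt_irrefl _)
    have := (order_pres hSa hSb hW u.2 u'.2 hne (heven u.1 u.2) (heven u'.1 u'.2)).1 hlt
    exact this
  have hbij : Function.Bijective f :=
    ⟨hmono.injective, fun v => ⟨g v, hfg v⟩⟩
  refine ⟨{ toEquiv := Equiv.ofBijective f hbij, map_rel_iff' := ?_ }, ?_⟩
  · intro a b
    exact hmono.le_iff_le
  · intro i
    show W.letter (far A B i.1) = W.letter i.1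
    rw [far_letter hSa hSb, if_pos (heven i.1 i.2)]

/-- Existence of a maximal arch system, by Zorn's lemma. -/
lemma exists_maximal_archSystem (W : CWord X) : ∃ A, Maximal (IsArchSystem W) A := by
  have := zorn_subset {A : Set (W.ι × W.ι) | IsArchSystem W A} ?_
  · obtain ⟨m, hm⟩ := this
    exact ⟨m, hm⟩
  · intro c hc hchain
    refine ⟨⋃₀ c, ?_, fun s hs => Set.subset_sUnion_of_mem hs⟩
    have pair_common : ∀ a ∈ ⋃₀ c, ∀ b ∈ ⋃₀ c, ∃ s ∈ c, a ∈ s ∧ b ∈ s := by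
      rintro a ⟨s, hs, has⟩ b ⟨t, ht, hbt⟩
      rcases eq_or_ne s t with rfl | hst
      · exact ⟨s, hs, has, hbt⟩
      · rcases hchain hs ht hst with h | h
        · exact ⟨t, ht, h has, hbt⟩
        · exact ⟨s, hs, has, h hbt⟩
    refine ⟨?_, ?_, ?_, ?_, ?_⟩
    · rintro a ⟨s, hs, has⟩
      exact (hc hs).lt _ has
    · rintro a ⟨s, hs, has⟩
      exact (hc hs).inv_letters _ has
    · intro a ha b hb hne
      obtain ⟨s, hs, has, hbs⟩ := pair_common a ha b hb
      exact (hc hs).disjointEnds _ has _ hbs hne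
    · intro a ha b hb
      obtain ⟨s, hs, has, hbs⟩ := pair_common a ha b hb
      exact (hc hs).noncrossing _ has _ hbs
    · rintro a ⟨s, hs, has⟩ k h1 h2
      obtain ⟨b, hb, hcase⟩ := (hc hs).nested _ has k h1 h2
      exact ⟨b, ⟨s, hs, hb⟩, hcase⟩

end CWord
theorem statement2 {X : Type} (W : CWord X) (hW : CWord.Restricted W) :
    (∃ U, CWord.IsReducedFormOf U W) ∧
      ∀ U V, CWord.IsReducedFormOf U W → CWord.IsReducedFormOf V W → CWord.Equiv U V := by
  obtain ⟨A, hA⟩ := CWord.exists_maximal_archSystem W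
  constructor
  · exact ⟨W.restrict {i | ¬ CWord.OnArch A i}, A, hA, CWord.equiv_refl _⟩
  · rintro U V ⟨A1, hA1, hU⟩ ⟨A2, hA2, hV⟩
    exact CWord.equiv_trans hU
      (CWord.equiv_trans (CWord.equiv_restrict_of_maximal hW hA1 hA2) (CWord.equiv_symm hV))
end

section
/- The group with presentation ⟨u₂, u₃, u₄, … | u_i = u_{i+1}^{i+1} for all i ≥ 2⟩ (the quotient of the free group on generators u_i, i ≥ 2, by the normal closure of the relators u_i⁻¹·u_{i+1}^{i+1}) is isomorphic to the additive group of rational numbers (ℚ, +). -/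
/-
Sending `u_i` to `1/i!` respects the relations, since `(i+1) • (1/(i+1)!) = 1/i!`.
In the presented group the relations make `u_i` a power of `u_M` whenever `i ≤ M`, so every
element is a single power `u_M ^ n`; it maps to `n / M!`, which vanishes only for `n = 0`, and
every rational `p` has this form as soon as `den p ≤ M`.
-/

/-- The generators `u_i`, `i ≥ 2`. -/
abbrev PresAlpha : Type := {i : ℕ // 2 ≤ i}

/-- The relators `u_i⁻¹ · u_{i+1}^{i+1}`, `i ≥ 2`. -/
def presRels : Set (FreeGroup PresAlpha) :=
  {r | ∃ (i : ℕ) (h : 2 ≤ i),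
    r = (FreeGroup.of (⟨i, h⟩ : PresAlpha))⁻¹ *
      (FreeGroup.of (⟨i + 1, by omega⟩ : PresAlpha)) ^ (i + 1)}

open Nat

section SatisfiesPresRels

variable {G : Type*} [Group G]

def SatisfiesPresRels (g : PresAlpha → G) : Prop :=
  ∀ r ∈ presRels, FreeGroup.lift g r = 1

variable {g : PresAlpha → G}

theorem satisfiesPresRels_iff :
    SatisfiesPresRels g ↔ ∀ i (hi : 2 ≤ i), g ⟨i, hi⟩ = g ⟨i + 1, by omega⟩ ^ (i + 1) := by
  simp [SatisfiesPresRels, presRels, forall_comm (α := FreeGroup PresAlpha), inv_mul_eq_one]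

theorem SatisfiesPresRels.eq_pow_factorial_div (hg : SatisfiesPresRels g)
    {i M : PresAlpha} (hiM : i ≤ M) : g i = g M ^ (M.1 ! / i.1 !) := by
  obtain ⟨M, hM⟩ := M
  change i.1 ≤ M at hiM
  induction M, hiM using Nat.le_induction with
  | base => simp [Nat.div_self (factorial_pos _)]
  | succ M hiM ih =>
    rw [ih (le_trans i.2 hiM), satisfiesPresRels_iff.1 hg M (le_trans i.2 hiM), ← pow_mul,
      factorial_succ, Nat.mul_div_assoc _ (factorial_dvd_factorial hiM)]

theorem SatisfiesPresRels.zpow_eq_zpow_of_le (hg : SatisfiesPresRels g)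
    {i M : PresAlpha} (hiM : i ≤ M) (n : ℤ) :
    g i ^ n = g M ^ (((M.1 ! / i.1 ! : ℕ) : ℤ) * n) := by
  rw [hg.eq_pow_factorial_div hiM, ← zpow_natCast, ← zpow_mul]

theorem SatisfiesPresRels.exists_eq_zpow (hg : SatisfiesPresRels g)
    (hgen : Subgroup.closure (Set.range g) = ⊤) (x : G) :
    ∃ (M : PresAlpha) (n : ℤ), x = g M ^ n := by
  induction (hgen ▸ Subgroup.mem_top x : x ∈ Subgroup.closure (Set.range g))
    using Subgroup.closure_induction with
  | mem x hx =>
    obtain ⟨M, rfl⟩ := hx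
    exact ⟨M, 1, (zpow_one _).symm⟩
  | one => exact ⟨⟨2, le_rfl⟩, 0, (zpow_zero _).symm⟩
  | mul x y _ _ hx hy =>
    obtain ⟨M₁, n₁, rfl⟩ := hx
    obtain ⟨M₂, n₂, rfl⟩ := hy
    rw [hg.zpow_eq_zpow_of_le (le_max_left M₁ M₂), hg.zpow_eq_zpow_of_le (le_max_right M₁ M₂),
      ← zpow_add]
    exact ⟨_, _, rfl⟩
  | inv x _ hx =>
    obtain ⟨M, n, rfl⟩ := hx
    exact ⟨M, -n, (zpow_neg _ _).symm⟩

end SatisfiesPresRels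

theorem satisfiesPresRels_of :
    SatisfiesPresRels (PresentedGroup.of : PresAlpha → PresentedGroup presRels) := by
  have hlift : FreeGroup.lift PresentedGroup.of = PresentedGroup.mk presRels :=
    FreeGroup.ext_hom _ _ fun _ => FreeGroup.lift_apply_of
  intro r hr
  rw [hlift]
  exact PresentedGroup.one_of_mem hr

theorem satisfiesPresRels_inv_factorial :
    SatisfiesPresRels fun i : PresAlpha => Multiplicative.ofAdd ((i.1 ! : ℚ)⁻¹) := by
  refine satisfiesPresRels_iff.2 fun i _ => ?_
  rw [← ofAdd_nsmul, nsmul_eq_mul, factorial_succ, cast_mul, mul_inv, ← mul_assoc,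
    mul_inv_cancel₀ (by positivity), one_mul]

noncomputable def presToRat : PresentedGroup presRels →* Multiplicative ℚ :=
  PresentedGroup.toGroup satisfiesPresRels_inv_factorial

theorem presToRat_of (M : PresAlpha) :
    presToRat (PresentedGroup.of M) = Multiplicative.ofAdd ((M.1 ! : ℚ)⁻¹) :=
  PresentedGroup.toGroup.of satisfiesPresRels_inv_factorial

theorem presToRat_of_zpow (M : PresAlpha) (n : ℤ) :
    presToRat (PresentedGroup.of M ^ n) = Multiplicative.ofAdd ((n : ℚ) / M.1 !) := by
  rw [map_zpow, presToRat_of, ← ofAdd_zsmul, zsmul_eq_mul, div_eq_mul_inv]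

theorem Rat.exists_eq_intCast_div_factorial (p : ℚ) {M : ℕ} (hM : p.den ≤ M) :
    ∃ n : ℤ, p = n / M ! := by
  obtain ⟨c, hc⟩ := Nat.dvd_factorial p.pos hM
  refine ⟨p.num * c, ?_⟩
  have hc0 : (c : ℚ) ≠ 0 := Nat.cast_ne_zero.2 (right_ne_zero_of_mul (hc ▸ factorial_ne_zero M))
  rw [hc]
  push_cast
  rw [mul_div_mul_right _ _ hc0, Rat.num_div_den]

theorem presToRat_bijective : Function.Bijective presToRat := by
  have hpow := satisfiesPresRels_of.exists_eq_zpow (PresentedGroup.closure_range_of presRels)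
  constructor
  · refine (injective_iff_map_eq_one presToRat).2 fun x hx => ?_
    obtain ⟨M, n, rfl⟩ := hpow x
    rw [presToRat_of_zpow, ← ofAdd_zero, Multiplicative.ofAdd.injective.eq_iff,
      div_eq_zero_iff] at hx
    obtain hn | hM := hx
    · rw [Int.cast_eq_zero.1 hn, zpow_zero]
    · exact absurd hM (by positivity)
  · intro q
    let M : PresAlpha := ⟨max q.toAdd.den 2, le_max_right _ _⟩
    obtain ⟨n, hn⟩ := Rat.exists_eq_intCast_div_factorial q.toAdd (le_max_left _ 2)
    exact ⟨PresentedGroup.of M ^ n, by rw [presToRat_of_zpow, ← hn]; rfl⟩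

theorem statement18 : Nonempty (PresentedGroup presRels ≃* Multiplicative ℚ) :=
  ⟨MulEquiv.ofBijective presToRat presToRat_bijective⟩
end
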